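/- arXiv:1201.5820 — 5 statements merged into one kernel-verified Lean document; each statement's English description precedes it below -/
import Mathlib

section
/- For any integers i, j with 0 ≤ j ≤ i, the residue in x0 of (x0-y0)^j · ((x0-y0)^{-i-1} - (-y0+x0)^{-i-1}) equals the Kronecker delta δ_{ij}; and for j > i this residue is 0. Here (x0-y0)^{-i-1} is expanded in nonnegative powers of y0 and (-y0+x0)^{-i-1} in nonnegative powers of x0, and Res_{x0} extracts the coefficient of x0^{-1}. -/
/-- Generalized binomial coefficient `C(n,k) = n(n-1)⋯(n-k+1)/k!` for an integer `n`. -/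
noncomputable def cchoose (n : ℤ) (k : ℕ) : ℂ :=
  (∏ i ∈ Finset.range k, ((n : ℂ) - (i : ℂ))) / (Nat.factorial k : ℂ)

/-- Coefficient of `x0^a y0^b` in `(x0 - y0)^m`, expanded in nonnegative powers of `y0`. -/
noncomputable def binCoeff (m a b : ℤ) : ℂ :=
  if 0 ≤ b ∧ a + b = m then (-1 : ℂ) ^ b * cchoose m b.toNat else 0

/-- Coefficient of `y0^p x0^q` in `(-y0 + x0)^m`, expanded in nonnegative powers of `x0`:
`(-y0+x0)^m = Σ_{q≥0} C(m,q) (-1)^{m-q} y0^{m-q} x0^q`. -/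
noncomputable def negBinCoeff (m p q : ℤ) : ℂ :=
  if 0 ≤ q ∧ p + q = m then (-1 : ℂ) ^ p * cchoose m q.toNat else 0

/-- Coefficient of `y0^b` in
`Res_{x0} (x0-y0)^j ((x0-y0)^{-i-1} - (-y0+x0)^{-i-1})`:
the first term is `(x0-y0)^{j-i-1}` (expanded in nonnegative powers of `y0`), evaluated
at `x0`-exponent `-1`; the second term is the product of the polynomial `(x0-y0)^j`
with `(-y0+x0)^{-i-1}` (expanded in nonnegative powers of `x0`), evaluated at
`x0`-exponent `-1`. -/
noncomputable def resCoeff (i j : ℕ) (b : ℤ) : ℂ :=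
  binCoeff ((j : ℤ) - i - 1) (-1) b -
    ∑ t ∈ Finset.range (j + 1),
      binCoeff (j : ℤ) ((j : ℤ) - t) (t : ℤ) *
        negBinCoeff (-(i : ℤ) - 1) (b - t) (-1 - ((j : ℤ) - t))


/-!
Every term of the second summand carries `x0` to a negative power coming from
`(-y0+x0)^{-i-1}`, which is expanded in nonnegative powers of `x0`, so it contributes nothing.
The residue is therefore that of `(x0-y0)^{n-1}` with `n = j - i`, namely
`(-1)^n C(n-1, n) y0^n`, and `C(n-1, n)` vanishes for `n > 0` since the factor `n-1-(n-1)`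
occurs in its numerator.
-/

lemma cchoose_zero (n : ℤ) : cchoose n 0 = 1 := by
  simp [cchoose]

lemma cchoose_sub_one_self {k : ℕ} (hk : 0 < k) : cchoose ((k : ℤ) - 1) k = 0 := by
  have hfactor : ((((k : ℤ) - 1 : ℤ) : ℂ) - ((k - 1 : ℕ) : ℂ)) = 0 := by
    push_cast [Nat.cast_sub hk]
    ring
  rw [cchoose, Finset.prod_eq_zero (Finset.mem_range.mpr (Nat.sub_lt hk one_pos)) hfactor,
    zero_div]

lemma negBinCoeff_of_neg {q : ℤ} (hq : q < 0) (m p : ℤ) : negBinCoeff m p q = 0 :=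
  if_neg fun h => (not_le.mpr hq) h.1

lemma binCoeff_sub_one_neg_one (n b : ℤ) :
    binCoeff (n - 1) (-1) b = if b = 0 ∧ n = 0 then 1 else 0 := by
  unfold binCoeff
  by_cases hb : 0 ≤ b ∧ -1 + b = n - 1
  · obtain ⟨hb0, hbn⟩ := hb
    obtain ⟨k, rfl⟩ : ∃ k : ℕ, b = k := ⟨b.toNat, (Int.toNat_of_nonneg hb0).symm⟩
    obtain rfl : n = k := by omega
    rw [if_pos ⟨hb0, hbn⟩, Int.toNat_natCast]
    rcases Nat.eq_zero_or_pos k with rfl | hk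
    · simp [cchoose_zero]
    · rw [if_neg (by omega), cchoose_sub_one_self hk, mul_zero]
  · rw [if_neg hb, if_neg]
    rintro ⟨rfl, rfl⟩
    exact hb ⟨le_rfl, by ring⟩

/-- `Res_{x0} (x0-y0)^j ((x0-y0)^{-i-1} - (-y0+x0)^{-i-1}) = δ_{ij}` for `0 ≤ j ≤ i`,
and `= 0` for `j > i` (in particular the result vanishes whenever `i ≠ j`). -/
theorem stmt1 (i j : ℕ) (b : ℤ) :
    resCoeff i j b = if b = 0 ∧ i = j then 1 else 0 := by
  have hsum : ∑ t ∈ Finset.range (j + 1),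
      binCoeff (j : ℤ) ((j : ℤ) - t) (t : ℤ) *
        negBinCoeff (-(i : ℤ) - 1) (b - t) (-1 - ((j : ℤ) - t)) = 0 := by
    refine Finset.sum_eq_zero fun t ht => ?_
    have ht' : t < j + 1 := Finset.mem_range.mp ht
    rw [negBinCoeff_of_neg (by omega), mul_zero]
  rw [resCoeff, hsum, sub_zero, show (j : ℤ) - i - 1 = ((j : ℤ) - i) - 1 by ring,
    binCoeff_sub_one_neg_one]
  simp only [sub_eq_zero, Nat.cast_inj, eq_comm (a := j)]
end

section
/- Let W be a vector space, r ≥ 1, and let a(x0,x), b(x0,x) ∈ E(W,r) = Hom(W, W[[x1^{±1},…,xr^{±1}]]((x0))). If there is a nonnegative integer k such that (x0-y0)^k a(x0,x) b(y0,y) = (x0-y0)^k b(y0,y) a(x0,x) (mutual locality), then (x0-y0)^k a(x0,x) b(y0,y) lies in Hom(W, W[[x1^{±1},y1^{±1},…,xr^{±1},yr^{±1}]]((x0,y0))), i.e., the pair (a,b) is compatible: applied to any w ∈ W, the x0- and y0-powers appearing are bounded below. -/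
/-- Coefficients of an element of `E(W,r) = Hom(W, W[[x1^{±1},…,xr^{±1}]]((x0)))`:
`A n m` is the coefficient of `x0^{-n-1} x^{-m}`. -/
abbrev ECoeff (r : ℕ) (W : Type*) := ℤ → (Fin r → ℤ) → W → W

/- The coefficient of `x0^P y0^Q` involves `a` only through indices `≥ -P-1` and `b` only through
indices `≥ -Q-1`. For small `Q` the factor `b` acting first on `w` vanishes; for small `P`,
locality lets `a` act first, and it vanishes. -/
theorem stmt2_general (r : ℕ) (W : Type*) [AddCommGroup W] [Module ℂ W]
    (A B : ECoeff r W)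
    (hAlin : ∀ n m, IsLinearMap ℂ (A n m)) (hBlin : ∀ n m, IsLinearMap ℂ (B n m))
    (hAtr : ∀ w : W, ∃ N : ℤ, ∀ n : ℤ, N ≤ n → ∀ m, A n m w = 0)
    (hBtr : ∀ w : W, ∃ N : ℤ, ∀ n : ℤ, N ≤ n → ∀ m, B n m w = 0)
    (k : ℕ)
    (hloc : ∀ (w : W) (P Q : ℤ) (M N : Fin r → ℤ),
      ∑ t ∈ Finset.range (k+1), ((-1:ℂ)^t * (k.choose t : ℂ)) •
        A ((k:ℤ)-t-P-1) (-M) (B ((t:ℤ)-Q-1) (-N) w)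
      = ∑ t ∈ Finset.range (k+1), ((-1:ℂ)^t * (k.choose t : ℂ)) •
        B ((t:ℤ)-Q-1) (-N) (A ((k:ℤ)-t-P-1) (-M) w)) :
    ∀ w : W, ∃ Nb : ℤ, ∀ (P Q : ℤ) (M N : Fin r → ℤ), (P < Nb ∨ Q < Nb) →
      ∑ t ∈ Finset.range (k+1), ((-1:ℂ)^t * (k.choose t : ℂ)) •
        A ((k:ℤ)-t-P-1) (-M) (B ((t:ℤ)-Q-1) (-N) w) = 0 := by
  intro w
  obtain ⟨NA, hNA⟩ := hAtr w
  obtain ⟨NB, hNB⟩ := hBtr w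
  refine ⟨min (-NA) (-NB), fun P Q M N hPQ => ?_⟩
  rcases hPQ with hP | hQ
  · rw [hloc]
    refine Finset.sum_eq_zero fun t ht => ?_
    have htk : (t : ℤ) ≤ k := by
      have := Finset.mem_range.mp ht
      omega
    rw [hNA _ (by omega), (hBlin _ _).map_zero, smul_zero]
  · refine Finset.sum_eq_zero fun t _ => ?_
    rw [hNB _ (by omega), (hAlin _ _).map_zero, smul_zero]

/-- Let `W` be a vector space, `r ≥ 1`, and `a, b ∈ E(W,r)`, encoded by their
coefficient functions `A B : ECoeff r W` (linear, with `x0`-powers bounded below on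
each vector).  If `(x0-y0)^k a(x0,x) b(y0,y) = (x0-y0)^k b(y0,y) a(x0,x)` (mutual
locality, stated coefficientwise: the displayed sums are the coefficients of
`x0^P y0^Q x^M y^N`, applied to `w`), then `(x0-y0)^k a(x0,x) b(y0,y)` lies in
`Hom(W, W[[x^{±1}, y^{±1}]]((x0,y0)))`: applied to any `w`, its `x0`- and
`y0`-powers are jointly bounded below. -/
theorem stmt2 (r : ℕ) (hr : 1 ≤ r) (W : Type*) [AddCommGroup W] [Module ℂ W]
    (A B : ECoeff r W)
    (hAlin : ∀ n m, IsLinearMap ℂ (A n m)) (hBlin : ∀ n m, IsLinearMap ℂ (B n m))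
    (hAtr : ∀ w : W, ∃ N : ℤ, ∀ n : ℤ, N ≤ n → ∀ m, A n m w = 0)
    (hBtr : ∀ w : W, ∃ N : ℤ, ∀ n : ℤ, N ≤ n → ∀ m, B n m w = 0)
    (k : ℕ)
    (hloc : ∀ (w : W) (P Q : ℤ) (M N : Fin r → ℤ),
      ∑ t ∈ Finset.range (k+1), ((-1:ℂ)^t * (k.choose t : ℂ)) •
        A ((k:ℤ)-t-P-1) (-M) (B ((t:ℤ)-Q-1) (-N) w)
      = ∑ t ∈ Finset.range (k+1), ((-1:ℂ)^t * (k.choose t : ℂ)) •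
        B ((t:ℤ)-Q-1) (-N) (A ((k:ℤ)-t-P-1) (-M) w)) :
    ∀ w : W, ∃ Nb : ℤ, ∀ (P Q : ℤ) (M N : Fin r → ℤ), (P < Nb ∨ Q < Nb) →
      ∑ t ∈ Finset.range (k+1), ((-1:ℂ)^t * (k.choose t : ℂ)) •
        A ((k:ℤ)-t-P-1) (-M) (B ((t:ℤ)-Q-1) (-N) w) = 0 :=
  stmt2_general r W A B hAlin hBlin hAtr hBtr k hloc
end

section
/- Let U be an ordinary vertex algebra with pairwise commuting derivations D_1,…,D_r acting semisimply on U with integer eigenvalues. Define Y(u;x0,x) = Y(x^D u, x0) where x^D = x1^{D_1}⋯xr^{D_r}. Then U with this map and the original vacuum becomes an extended (r+1)-toroidal vertex algebra with D_0 equal to the canonical derivation of U, and moreover U^0 = U (the left ideal generated by the vacuum is all of U). -/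
/-- An `(r+1)`-toroidal vertex algebra: a vector space `V` with a linear map
`Y(·;x0,x) : V → Hom(V, V[[x1^{±1},…,xr^{±1}]]((x0)))` (here `Y u n m` is the
coefficient `u_{n,m}` of `x0^{-n-1} x^{-m}`), a vacuum `vac` with
`Y(vac;x0,x)v = v` and `Y(v;x0,x)vac ∈ V[[x0,x^{±1}]]`, and the Jacobi identity
`z0⁻¹δ((x0-y0)/z0) Y(u;x0,zy)Y(v;y0,y) - z0⁻¹δ((y0-x0)/(-z0)) Y(v;y0,y)Y(u;x0,zy)
 = y0⁻¹δ((x0-z0)/y0) Y(Y(u;z0,z)v;y0,y)`,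
stated coefficientwise: the field `jacobi` is the coefficient of
`x0^a y0^b z0^c z^p y^q`, applied to `w`. -/
structure ToroidalVA (r : ℕ) (V : Type*) [AddCommGroup V] [Module ℂ V] where
  Y : V →ₗ[ℂ] (ℤ → (Fin r → ℤ) → Module.End ℂ V)
  vac : V
  trunc : ∀ u v : V, ∃ N : ℤ, ∀ n : ℤ, N ≤ n → ∀ m : Fin r → ℤ, Y u n m v = 0
  vacuum_prop : ∀ (n : ℤ) (m : Fin r → ℤ) (v : V),
    Y vac n m v = if n = -1 ∧ m = 0 then v else 0
  creation : ∀ (u : V) (n : ℤ) (m : Fin r → ℤ), 0 ≤ n → Y u n m vac = 0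
  jacobi : ∀ (u v w : V) (a b c : ℤ) (p q : Fin r → ℤ),
    (∑ᶠ β : ℕ, ((-1 : ℂ) ^ β * cchoose (-c-1) β) •
        Y u (-a-c-2-(β:ℤ)) (-p) (Y v ((β:ℤ)-b-1) (p-q) w))
    - (∑ᶠ α : ℕ, ((-1 : ℂ) ^ c * (-1 : ℂ) ^ α * cchoose (-c-1) α) •
        Y v (-c-b-(α:ℤ)-2) (p-q) (Y u ((α:ℤ)-a-1) (-p) w))
    = ∑ᶠ γ : ℕ, ((-1 : ℂ) ^ γ * cchoose (a+(γ:ℤ)) γ) •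
        Y (Y u ((γ:ℤ)-c-1) (-p) v) (-a-b-(γ:ℤ)-2) (-q) w

/-- An extended `(r+1)`-toroidal vertex algebra: an `(r+1)`-toroidal vertex
algebra together with operators `D0, D1, …, Dr` killing the vacuum and satisfying
`[D0, Y(v;x0,x)] = Y(D0 v;x0,x) = ∂/∂x0 Y(v;x0,x)` and
`[Dj, Y(v;x0,x)] = Y(Dj v;x0,x) = xj ∂/∂xj Y(v;x0,x)` for `1 ≤ j ≤ r`,
stated on components `Y v n m` (the coefficient of `x0^{-n-1} x^{-m}`). -/
structure ExtToroidalVA (r : ℕ) (V : Type*) [AddCommGroup V] [Module ℂ V]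
    extends ToroidalVA r V where
  D0 : Module.End ℂ V
  Dj : Fin r → Module.End ℂ V
  D0_vac : D0 vac = 0
  Dj_vac : ∀ i, Dj i vac = 0
  D0_comm : ∀ (u : V) (n : ℤ) (m : Fin r → ℤ),
    D0 ∘ₗ Y u n m - Y u n m ∘ₗ D0 = Y (D0 u) n m
  D0_deriv : ∀ (u : V) (n : ℤ) (m : Fin r → ℤ),
    Y (D0 u) n m = ((-n : ℂ)) • Y u (n-1) m
  Dj_comm : ∀ (i : Fin r) (u : V) (n : ℤ) (m : Fin r → ℤ),
    Dj i ∘ₗ Y u n m - Y u n m ∘ₗ Dj i = Y (Dj i u) n m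
  Dj_deriv : ∀ (i : Fin r) (u : V) (n : ℤ) (m : Fin r → ℤ),
    Y (Dj i u) n m = ((-(m i) : ℂ)) • Y u n m

/-- An ordinary vertex algebra, with `Y u n` the coefficient of `x0^{-n-1}`,
the vacuum, truncation, vacuum property, creation property, and the Jacobi
identity stated coefficientwise at `x0^a y0^b z0^c`. -/
structure VertexAlg (V : Type*) [AddCommGroup V] [Module ℂ V] where
  Y : V →ₗ[ℂ] (ℤ → Module.End ℂ V)
  vac : V
  trunc : ∀ u v : V, ∃ N : ℤ, ∀ n : ℤ, N ≤ n → Y u n v = 0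
  vacuum_prop : ∀ (n : ℤ) (v : V), Y vac n v = if n = -1 then v else 0
  creation0 : ∀ (u : V) (n : ℤ), 0 ≤ n → Y u n vac = 0
  creation1 : ∀ u : V, Y u (-1) vac = u
  jacobi : ∀ (u v w : V) (a b c : ℤ),
    (∑ᶠ β : ℕ, ((-1 : ℂ) ^ β * cchoose (-c-1) β) •
        Y u (-a-c-2-(β:ℤ)) (Y v ((β:ℤ)-b-1) w))
    - (∑ᶠ α : ℕ, ((-1 : ℂ) ^ c * (-1 : ℂ) ^ α * cchoose (-c-1) α) •
        Y v (-c-b-(α:ℤ)-2) (Y u ((α:ℤ)-a-1) w))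
    = ∑ᶠ γ : ℕ, ((-1 : ℂ) ^ γ * cchoose (a+(γ:ℤ)) γ) •
        Y (Y u ((γ:ℤ)-c-1) v) (-a-b-(γ:ℤ)-2) w

/-- A derivation of a vertex algebra: `[d, Y(v,x)] = Y(dv, x)`. -/
def VertexAlg.IsDerivation {V : Type*} [AddCommGroup V] [Module ℂ V]
    (U : VertexAlg V) (d : Module.End ℂ V) : Prop :=
  ∀ (v : V) (n : ℤ), d ∘ₗ U.Y v n - U.Y v n ∘ₗ d = U.Y (d v) n

inductive Reach {r : ℕ} {V : Type*} [AddCommGroup V] [Module ℂ V]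
    (T : ToroidalVA r V) : V → Prop
  | vac : Reach T T.vac
  | step (u : V) (n : ℤ) (m : Fin r → ℤ) (w : V) : Reach T w → Reach T (T.Y u n m w)

/-- The left ideal `V⁰` generated by the vacuum. -/
noncomputable def Vzero {r : ℕ} {V : Type*} [AddCommGroup V] [Module ℂ V]
    (T : ToroidalVA r V) : Submodule ℂ V :=
  Submodule.span ℂ {w | Reach T w}

lemma cchoose_one (n : ℤ) : cchoose n 1 = n := by simp [cchoose]

lemma cchoose_natCast_sub_one_self {k : ℕ} (hk : 1 ≤ k) : cchoose ((k : ℤ) - 1) k = 0 := by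
  have hmem : k - 1 ∈ Finset.range k := Finset.mem_range.mpr (by omega)
  have hzero : (((k : ℤ) - 1 : ℤ) : ℂ) - ((k - 1 : ℕ) : ℂ) = 0 := by
    push_cast [Nat.cast_sub hk]; ring
  rw [cchoose, Finset.prod_eq_zero hmem hzero, zero_div]

lemma finsum_nat_eq_zero_add_one {M : Type*} [AddCommMonoid M] (f : ℕ → M)
    (hf : ∀ k, 2 ≤ k → f k = 0) : ∑ᶠ k, f k = f 0 + f 1 := by
  rw [finsum_eq_finsetSum_of_support_subset f (s := Finset.range 2), Finset.sum_range_succ,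
    Finset.sum_range_one]
  intro k hk
  by_contra hk2
  exact hk (hf k (by simp only [Finset.coe_range, Set.mem_Iio, not_lt] at hk2; omega))

namespace VertexAlg

variable {V : Type*} [AddCommGroup V] [Module ℂ V] (U : VertexAlg V)

lemma IsDerivation.apply_Y {U : VertexAlg V} {d : Module.End ℂ V} (hd : U.IsDerivation d)
    (v : V) (n : ℤ) (w : V) : d (U.Y v n w) = U.Y (d v) n w + U.Y v n (d w) := by
  have h := LinearMap.congr_fun (hd v n) w
  simp only [LinearMap.sub_apply, LinearMap.comp_apply] at h
  exact sub_eq_iff_eq_add.mp h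

lemma IsDerivation.map_vac {U : VertexAlg V} {d : Module.End ℂ V} (hd : U.IsDerivation d) :
    d U.vac = 0 := by
  have h := hd.apply_Y U.vac (-1) U.vac
  rw [U.vacuum_prop, U.vacuum_prop, if_pos rfl, if_pos rfl, right_eq_add] at h
  rw [← U.creation1 (d U.vac), h]

lemma Y_vac_eq_zero {n : ℤ} (hn : n ≠ -1) (v : V) : U.Y U.vac n v = 0 := by
  rw [U.vacuum_prop, if_neg hn]

noncomputable def canonicalDeriv : Module.End ℂ V where
  toFun u := U.Y u (-2) U.vac
  map_add' x y := by simp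
  map_smul' c x := by simp

lemma canonicalDeriv_apply (u : V) : U.canonicalDeriv u = U.Y u (-2) U.vac := rfl

lemma canonicalDeriv_vac : U.canonicalDeriv U.vac = 0 := by
  rw [canonicalDeriv_apply, U.Y_vac_eq_zero (by norm_num)]

/-- Jacobi identity for `(u, 1, w)` at `x0^{-n-2} y0^0 z0^1`. -/
lemma Y_canonicalDeriv (u : V) (n : ℤ) :
    U.Y (U.canonicalDeriv u) n = (-n : ℂ) • U.Y u (n - 1) := by
  ext w
  have h := U.jacobi u U.vac w (-n - 2) 0 1
  rw [finsum_eq_single _ 0 fun β hβ => by rw [U.Y_vac_eq_zero (by omega), map_zero, smul_zero],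
    finsum_eq_zero_of_forall_eq_zero fun α => by rw [U.Y_vac_eq_zero (by omega), smul_zero],
    finsum_nat_eq_zero_add_one _ fun γ hγ => by rw [U.creation0 u _ (by omega)]; simp] at h
  norm_num [U.vacuum_prop, cchoose_zero, cchoose_one, U.creation1] at h
  rw [show 2 + n - 1 - 2 = n - 1 by ring] at h
  rw [canonicalDeriv_apply, LinearMap.smul_apply]
  linear_combination (norm := module) -h

/-- Jacobi identity for `(u, w, 1)` at `x0^{-1} y0^1 z0^{-n-1}`. -/
lemma isDerivation_canonicalDeriv : U.IsDerivation U.canonicalDeriv := by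
  intro u n
  ext w
  have h := U.jacobi u w U.vac (-1) 1 (-n - 1)
  rw [finsum_nat_eq_zero_add_one _ fun β hβ => by rw [U.creation0 w _ (by omega)]; simp,
    finsum_eq_zero_of_forall_eq_zero fun α => by rw [U.creation0 u _ (by omega)]; simp,
    finsum_eq_single _ 0 fun γ hγ => by
      rw [neg_add_eq_sub, cchoose_natCast_sub_one_self (by omega), mul_zero, zero_smul]] at h
  norm_num [cchoose_zero, cchoose_one, U.creation1] at h
  rw [show 1 - (-n - 1) - 2 = n by ring] at h
  rw [Y_canonicalDeriv, LinearMap.smul_apply, LinearMap.sub_apply, LinearMap.comp_apply,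
    LinearMap.comp_apply, canonicalDeriv_apply, canonicalDeriv_apply]
  linear_combination (norm := module) -h

lemma IsDerivation.commute_canonicalDeriv {d : Module.End ℂ V} (hd : U.IsDerivation d) :
    Commute d U.canonicalDeriv :=
  LinearMap.ext fun u => by
    simp [canonicalDeriv_apply, hd.apply_Y, hd.map_vac]

end VertexAlg

namespace DirectSum.IsInternal

variable {ι R M N : Type*} [DecidableEq ι] [Semiring R] [AddCommMonoid M] [Module R M]
  [AddCommMonoid N] [Module R N] {A : ι → Submodule R M}

lemma linearMap_ext (h : IsInternal A) {f g : M →ₗ[R] N}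
    (hfg : ∀ i, ∀ x ∈ A i, f x = g x) : f = g :=
  LinearMap.ext_on (s := ⋃ i, (A i : Set M))
    (by rw [← Submodule.iSup_eq_span, h.submodule_iSup_eq_top])
    fun x hx => by
      obtain ⟨i, hi⟩ := Set.mem_iUnion.mp hx
      exact hfg i x hi

noncomputable def proj (h : IsInternal A) (i : ι) : Module.End R M :=
  (A i).subtype ∘ₗ DirectSum.component R ι (fun i => A i) i ∘ₗ
    (LinearEquiv.ofBijective (DirectSum.coeLinearMap A) h).symm.toLinearMap

lemma proj_apply (h : IsInternal A) (i : ι) (x : M) :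
    h.proj i x = ((LinearEquiv.ofBijective (DirectSum.coeLinearMap A) h).symm x i : M) :=
  rfl

lemma proj_mem (h : IsInternal A) (i : ι) (x : M) : h.proj i x ∈ A i :=
  SetLike.coe_mem _

lemma proj_of_mem (h : IsInternal A) {j : ι} {x : M} (hx : x ∈ A j) (i : ι) :
    h.proj i x = if i = j then x else 0 := by
  rw [proj_apply]
  split_ifs with hij
  · subst hij
    rw [h.ofBijective_coeLinearMap_of_mem hx]
  · exact congrArg Subtype.val (h.ofBijective_coeLinearMap_of_mem_ne (Ne.symm hij) hx)

lemma finite_support_proj (h : IsInternal A) (x : M) :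
    (Function.support fun i => h.proj i x).Finite :=
  (DFinsupp.finite_support ((LinearEquiv.ofBijective (DirectSum.coeLinearMap A) h).symm x)).subset
    fun i hi hzero => hi (by simp only [proj_apply, hzero, ZeroMemClass.coe_zero])

lemma proj_comp_of_mapsTo (h : IsInternal A) {f : Module.End R M}
    (hf : ∀ j, ∀ x ∈ A j, f x ∈ A j) (i : ι) : h.proj i ∘ₗ f = f ∘ₗ h.proj i :=
  h.linearMap_ext fun j x hx => by
    simp only [LinearMap.comp_apply, h.proj_of_mem hx, h.proj_of_mem (hf j x hx)]
    split_ifs <;> simp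

lemma proj_add_comp_of_mapsTo [AddCommGroup ι] (h : IsInternal A) {f : Module.End R M} {d : ι}
    (hf : ∀ j, ∀ x ∈ A j, f x ∈ A (d + j)) (i : ι) : h.proj (d + i) ∘ₗ f = f ∘ₗ h.proj i :=
  h.linearMap_ext fun j x hx => by
    simp only [LinearMap.comp_apply, h.proj_of_mem hx, h.proj_of_mem (hf j x hx),
      add_right_inj]
    split_ifs <;> simp

end DirectSum.IsInternal

namespace Module.End

variable {ι K V : Type*} [Field K] [AddCommGroup V] [Module K V]

def jointEigenspace (D : ι → End K V) (m : ι → ℤ) : Submodule K V :=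
  ⨅ i, (D i).eigenspace (m i)

variable {D : ι → End K V}

lemma mem_jointEigenspace {m : ι → ℤ} {u : V} :
    u ∈ jointEigenspace D m ↔ ∀ i, D i u = (m i : K) • u := by
  simp [jointEigenspace, Submodule.mem_iInf]

lemma mapsTo_jointEigenspace {f : End K V} (hf : ∀ i, Commute (D i) f) (m : ι → ℤ) :
    ∀ u ∈ jointEigenspace D m, f u ∈ jointEigenspace D m := by
  intro u hu
  rw [mem_jointEigenspace] at hu ⊢
  intro i
  rw [← mul_apply, (hf i).eq, mul_apply, hu i, map_smul]

lemma mapsTo_jointEigenspace_self (i : ι) (m : ι → ℤ) :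
    ∀ u ∈ jointEigenspace D m, D i u ∈ jointEigenspace D m := fun u hu => by
  rw [mem_jointEigenspace.mp hu i]
  exact Submodule.smul_mem _ _ hu

lemma iSupIndep_jointEigenspace [CharZero K] (hcomm : ∀ i j, Commute (D i) (D j)) :
    iSupIndep (jointEigenspace D) := by
  have hinj : Function.Injective fun (m : ι → ℤ) i => (m i : K) :=
    fun m m' hm => funext fun i => Int.cast_injective (congrFun hm i)
  refine ((independent_iInf_maxGenEigenspace_of_forall_mapsTo D fun i j φ =>
    mapsTo_maxGenEigenspace_of_comm (hcomm j i) φ).comp hinj).mono fun m =>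
      iInf_mono fun i => eigenspace_le_maxGenEigenspace

lemma isInternal_jointEigenspace [CharZero K] [DecidableEq (ι → ℤ)]
    (hcomm : ∀ i j, Commute (D i) (D j))
    (hspan : Submodule.span K {u : V | ∃ m : ι → ℤ, ∀ i, D i u = (m i : K) • u} = ⊤) :
    DirectSum.IsInternal (jointEigenspace D) := by
  refine DirectSum.isInternal_submodule_of_iSupIndep_of_iSup_eq_top
    (iSupIndep_jointEigenspace hcomm) (top_unique ?_)
  rw [← hspan, Submodule.span_le]
  rintro u ⟨m, hu⟩
  exact Submodule.mem_iSup_of_mem m (mem_jointEigenspace.mpr hu)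

end Module.End

namespace VertexAlg

open Module.End DirectSum

variable {V : Type*} [AddCommGroup V] [Module ℂ V] (U : VertexAlg V)

section Weights

variable {ι : Type*} {D : ι → Module.End ℂ V} (hder : ∀ i, U.IsDerivation (D i))
include hder

lemma Y_mem_jointEigenspace {m m' : ι → ℤ} {a b : V} (ha : a ∈ jointEigenspace D m)
    (hb : b ∈ jointEigenspace D m') (k : ℤ) : U.Y a k b ∈ jointEigenspace D (m + m') := by
  rw [mem_jointEigenspace] at ha hb ⊢
  intro i
  rw [(hder i).apply_Y, ha i, hb i, map_smul, map_smul, Pi.smul_apply, LinearMap.smul_apply,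
    ← add_smul, Pi.add_apply, Int.cast_add]

lemma vac_mem_jointEigenspace_zero : U.vac ∈ jointEigenspace D 0 :=
  mem_jointEigenspace.mpr fun i => by simp [(hder i).map_vac]

end Weights

variable {r : ℕ} {D : Fin r → Module.End ℂ V} (h : IsInternal (jointEigenspace D))

/-- `Y(u;x0,x) = Y(x^D u, x0)`: the mode `u_{n,m}` is the `n`-th mode of the weight `-m`
component of `u`. -/
noncomputable def toroidalY : V →ₗ[ℂ] ℤ → (Fin r → ℤ) → Module.End ℂ V where
  toFun u n m := U.Y (h.proj (-m) u) n
  map_add' x y := by ext; simp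
  map_smul' c x := by ext; simp

lemma toroidalY_apply (u : V) (n : ℤ) (m : Fin r → ℤ) :
    U.toroidalY h u n m = U.Y (h.proj (-m) u) n :=
  rfl

lemma toroidalY_of_mem {u : V} {mv : Fin r → ℤ} (hu : u ∈ jointEigenspace D mv) (n : ℤ)
    (m : Fin r → ℤ) : U.toroidalY h u n m = if m = -mv then U.Y u n else 0 := by
  rw [toroidalY_apply, h.proj_of_mem hu]
  simp only [neg_eq_iff_eq_neg]
  split_ifs <;> simp

lemma toroidalY_trunc (u v : V) :
    ∃ N : ℤ, ∀ n : ℤ, N ≤ n → ∀ m : Fin r → ℤ, U.toroidalY h u n m v = 0 := by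
  choose N hN using fun m => U.trunc (h.proj m u) v
  have hfin := h.finite_support_proj u
  obtain ⟨N₀, hN₀⟩ := (hfin.toFinset.image N).exists_le
  refine ⟨N₀, fun n hn m => ?_⟩
  by_cases hm : h.proj (-m) u = 0
  · simp [toroidalY_apply, hm]
  · exact hN (-m) n ((hN₀ _ (Finset.mem_image_of_mem N (hfin.mem_toFinset.mpr hm))).trans hn)

lemma toroidalY_map {f : Module.End ℂ V}
    (hf : ∀ m, ∀ x ∈ jointEigenspace D m, f x ∈ jointEigenspace D m) (u : V) (n : ℤ)
    (m : Fin r → ℤ) : U.toroidalY h (f u) n m = U.Y (f (h.proj (-m) u)) n := by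
  rw [toroidalY_apply, ← LinearMap.comp_apply (h.proj _), h.proj_comp_of_mapsTo hf,
    LinearMap.comp_apply]

variable {U}

lemma toroidalY_vac (hder : ∀ i, U.IsDerivation (D i)) (n : ℤ) (m : Fin r → ℤ) (v : V) :
    U.toroidalY h U.vac n m v = if n = -1 ∧ m = 0 then v else 0 := by
  rw [U.toroidalY_of_mem h (U.vac_mem_jointEigenspace_zero hder), neg_zero]
  split_ifs <;> simp_all [U.vacuum_prop]

lemma toroidalY_jacobi (hder : ∀ i, U.IsDerivation (D i)) (u v w : V) (a b c : ℤ)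
    (p q : Fin r → ℤ) :
    (∑ᶠ β : ℕ, ((-1 : ℂ) ^ β * cchoose (-c-1) β) •
        U.toroidalY h u (-a-c-2-(β:ℤ)) (-p) (U.toroidalY h v ((β:ℤ)-b-1) (p-q) w))
    - (∑ᶠ α : ℕ, ((-1 : ℂ) ^ c * (-1 : ℂ) ^ α * cchoose (-c-1) α) •
        U.toroidalY h v (-c-b-(α:ℤ)-2) (p-q) (U.toroidalY h u ((α:ℤ)-a-1) (-p) w))
    = ∑ᶠ γ : ℕ, ((-1 : ℂ) ^ γ * cchoose (a+(γ:ℤ)) γ) •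
        U.toroidalY h (U.toroidalY h u ((γ:ℤ)-c-1) (-p) v) (-a-b-(γ:ℤ)-2) (-q) w := by
  have hshift (k : ℤ) :
      h.proj q (U.Y (h.proj p u) k v) = U.Y (h.proj p u) k (h.proj (q - p) v) := by
    have hcomp := h.proj_add_comp_of_mapsTo
      (fun j x hx => U.Y_mem_jointEigenspace hder (h.proj_mem p u) hx k) (q - p)
    rw [add_sub_cancel] at hcomp
    exact LinearMap.congr_fun hcomp v
  simp only [toroidalY_apply, neg_neg, neg_sub, hshift]
  exact U.jacobi (h.proj p u) (h.proj (q - p) v) w a b c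

variable (U) in
noncomputable def toExtToroidalVA (hder : ∀ i, U.IsDerivation (D i)) : ExtToroidalVA r V where
  Y := U.toroidalY h
  vac := U.vac
  trunc := U.toroidalY_trunc h
  vacuum_prop := toroidalY_vac h hder
  creation _ _ _ hn := U.creation0 _ _ hn
  jacobi := toroidalY_jacobi h hder
  D0 := U.canonicalDeriv
  Dj := D
  D0_vac := U.canonicalDeriv_vac
  Dj_vac i := (hder i).map_vac
  D0_comm u n m := by
    rw [U.toroidalY_map h (mapsTo_jointEigenspace fun i => (hder i).commute_canonicalDeriv)]
    exact U.isDerivation_canonicalDeriv _ n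
  D0_deriv u n m := by
    rw [U.toroidalY_map h (mapsTo_jointEigenspace fun i => (hder i).commute_canonicalDeriv),
      Y_canonicalDeriv, toroidalY_apply]
  Dj_comm i u n m := by
    rw [U.toroidalY_map h (mapsTo_jointEigenspace_self i)]
    exact hder i _ n
  Dj_deriv i u n m := by
    rw [U.toroidalY_map h (mapsTo_jointEigenspace_self i),
      mem_jointEigenspace.mp (h.proj_mem _ u) i, map_smul, toroidalY_apply]
    simp

lemma vzero_toExtToroidalVA (hder : ∀ i, U.IsDerivation (D i))
    (hspan : Submodule.span ℂ {u : V | ∃ m : Fin r → ℤ, ∀ i, D i u = (m i : ℂ) • u} = ⊤) :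
    Vzero (U.toExtToroidalVA h hder).toToroidalVA = ⊤ := by
  rw [Vzero, eq_top_iff, ← hspan, Submodule.span_le]
  rintro u ⟨m, hu⟩
  have hgen : U.toroidalY h u (-1) (-m) U.vac = u := by
    rw [U.toroidalY_of_mem h (mem_jointEigenspace.mpr hu), if_pos rfl, U.creation1]
  rw [← hgen]
  exact Submodule.subset_span (Reach.step u (-1) (-m) _ Reach.vac)

end VertexAlg

/-- Let `U` be an ordinary vertex algebra with pairwise commuting derivations
`D_1,…,D_r` acting semisimply with integer eigenvalues (i.e. `U` is spanned by
simultaneous integer eigenvectors).  Setting `Y(u;x0,x) = Y(x^D u, x0)`, `U`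
becomes an extended `(r+1)`-toroidal vertex algebra with the same vacuum, with
`D_0` the canonical derivation `u ↦ u_{-2}1` of `U`, with `D_j = D j`, with
`Y(u;x0,x) = x^m Y(u,x0)` on an eigenvector `u` of eigenvalues `m` (i.e. the
`(n,m')`-component is `Y u n` if `m' = -m` and `0` otherwise), and `U⁰ = U`. -/
theorem stmt10 {r : ℕ} {V : Type*} [AddCommGroup V] [Module ℂ V]
    (U : VertexAlg V) (D : Fin r → Module.End ℂ V)
    (hder : ∀ i, U.IsDerivation (D i))
    (hcomm : ∀ i j, Commute (D i) (D j))
    (hss : Submodule.span ℂ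
      {u : V | ∃ mv : Fin r → ℤ, ∀ i, D i u = ((mv i : ℂ)) • u} = ⊤) :
    ∃ T : ExtToroidalVA r V,
      T.toToroidalVA.vac = U.vac ∧
      (∀ u : V, T.D0 u = U.Y u (-2) U.vac) ∧
      (∀ i, T.Dj i = D i) ∧
      (∀ (u : V) (mv : Fin r → ℤ), (∀ i, D i u = ((mv i : ℂ)) • u) →
        ∀ (n : ℤ) (m' : Fin r → ℤ),
          T.toToroidalVA.Y u n m' = if m' = -mv then U.Y u n else 0) ∧
      Vzero T.toToroidalVA = ⊤ := by
  have h := Module.End.isInternal_jointEigenspace hcomm hss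
  exact ⟨U.toExtToroidalVA h hder, rfl, fun _ => rfl, fun _ => rfl,
    fun _ _ hu => U.toroidalY_of_mem h (Module.End.mem_jointEigenspace.mpr hu),
    U.vzero_toExtToroidalVA h hder hss⟩
end

section
/- Let W be a vector space and suppose a(x0,x), b(x0,x), c(x0,x) ∈ E(W,r) are pairwise mutually local. Then for any (m0,m) ∈ ℤ×ℤ^r, the element a(x0,x)_{m0,m} b(x0,x) of E(W,r) is mutually local with c(x0,x). -/
/-- Membership in `E(W,r)`: on each vector the `x0`-powers are bounded below
(only finitely many negative powers of `x0`). -/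
def ETrunc {r : ℕ} {W : Type*} [AddCommGroup W] (A : ECoeff r W) : Prop :=
  ∀ w : W, ∃ N : ℤ, ∀ n : ℤ, N ≤ n → ∀ m : Fin r → ℤ, A n m w = 0

/-- Mutual locality with witness `k`:
`(x0-y0)^k a(x0,x) b(y0,y) = (x0-y0)^k b(y0,y) a(x0,x)`, stated coefficientwise:
both sides are the coefficients of `x0^P y0^Q x^M y^N`, applied to `w`. -/
def LocalTo {r : ℕ} {W : Type*} [AddCommGroup W] [Module ℂ W]
    (k : ℕ) (A B : ECoeff r W) : Prop :=
  ∀ (w : W) (P Q : ℤ) (M N : Fin r → ℤ),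
    ∑ t ∈ Finset.range (k+1), ((-1:ℂ)^t * (k.choose t : ℂ)) •
      A ((k:ℤ)-t-P-1) (-M) (B ((t:ℤ)-Q-1) (-N) w)
    = ∑ t ∈ Finset.range (k+1), ((-1:ℂ)^t * (k.choose t : ℂ)) •
      B ((t:ℤ)-Q-1) (-N) (A ((k:ℤ)-t-P-1) (-M) w)

/-- The component `a(y0,y)_{m0,m} b(y0,y)` of `Y_E(a(y0,y); z0,z) b(y0,y)`,
given (for mutually local `a, b`) by the residue formula
`a_{m0,m}b = Res_{x0} Res_x x^{m-1} y^{-m}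
  [ (x0-y0)^{m0} a(x0,x)b(y0,y) - (-y0+x0)^{m0} b(y0,y)a(x0,x) ]`,
stated coefficientwise: `prodCoeff A B m0 m n q w` is the coefficient of
`y0^{-n-1} y^{-q}` applied to `w`.  Here `(x0-y0)^{m0}` is expanded in
nonnegative powers of `y0` and `(-y0+x0)^{m0}` in nonnegative powers of `x0`. -/
noncomputable def prodCoeff {r : ℕ} {W : Type*} [AddCommGroup W] [Module ℂ W]
    (A B : ECoeff r W) (m0 : ℤ) (m : Fin r → ℤ) : ECoeff r W :=
  fun n q w =>
    (∑ᶠ t : ℕ, ((-1:ℂ)^t * cchoose m0 t) • A (m0 - t) m (B (n + t) (q - m) w))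
    - ∑ᶠ s : ℕ, ((-1:ℂ)^(m0 - (s:ℤ)) * cchoose m0 s) • B (m0 - s + n) (q - m) (A s m w)

/-!
Write `a(x₀) b(y₀) c(z₀) w` as an array indexed by the mode triples `(p, q, s) ∈ ℤ³`.
Multiplication by `x₀ - y₀`, `x₀ - z₀`, `y₀ - z₀` becomes a difference of shifts `D₁₂`, `D₁₃`,
`D₂₃ = D₁₃ - D₁₂`, and the two expansions of `(x₀ - y₀)^m₀` become series of shifts, which make
sense on arrays vanishing far out in the `y₀`, resp. `x₀`, direction. Let `Θ` be the array whose
`(0, n, s)` entry is `(a_{m₀}b)_n c_s w - c_s (a_{m₀}b)_n w`.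
* `D₁₂^(k_ab + max(-m₀, 0))` kills `Θ`: it turns both expansions into the same polynomial
  `D₁₂^(k_ab + max(m₀, 0))`, which lets `a` and `b` commute.
* `D₂₃^k_bc D₁₃^k_ac` kills `Θ`: it moves `c` from the right of `a, b` to their left.
* Expanding `D₂₃^(k_bc + (k_ab + max(-m₀, 0) + k_ac)) = D₂₃^k_bc (D₁₃ - D₁₂)^(…)` binomially,
  every term contains one of these two annihilators (Dong's lemma), and the entries of `D₂₃^K Θ`
  at `x₀`-mode `0` are exactly the locality relations of `a_{m₀}b` and `c`.
-/

open Finset Filter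

lemma descPochhammer_smeval_eq_prod_range {R : Type*} [CommRing R] (n : ℕ) (r : R) :
    (descPochhammer ℤ n).smeval r = ∏ i ∈ range n, (r - i) := by
  induction n with
  | zero => simp
  | succ n ih =>
    rw [descPochhammer_succ_right, Polynomial.smeval_mul, ih, prod_range_succ]
    simp [Polynomial.smeval_sub, Polynomial.smeval_X, Polynomial.smeval_natCast]

lemma cchoose_eq_ringChoose (m : ℤ) (k : ℕ) : cchoose m k = Ring.choose (m : ℂ) k := by
  rw [Ring.choose_eq_smul, cchoose, descPochhammer_smeval_eq_prod_range, smul_eq_mul,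
    div_eq_inv_mul]

lemma cchoose_natCast (n k : ℕ) : cchoose n k = n.choose k := by
  rw [cchoose_eq_ringChoose, Int.cast_natCast, Ring.choose_natCast]

lemma finsum_eq_sum_range {M : Type*} [AddCommMonoid M] {f : ℕ → M} {T : ℕ}
    (h : ∀ i, T ≤ i → f i = 0) : ∑ᶠ i, f i = ∑ i ∈ range T, f i :=
  finsum_eq_sum_of_support_subset f fun i hi => by
    by_contra hiT
    exact hi (h i (by simpa using hiT))

lemma hasFiniteSupport_of_eventually_eq_zero {M : Type*} [Zero M] {f : ℕ → M}
    (h : ∀ᶠ i in atTop, f i = 0) : Function.HasFiniteSupport f := by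
  rw [← Nat.cofinite_eq_atTop] at h
  exact h

lemma eventually_add_natCast {p : ℤ → Prop} (hp : ∀ᶠ n in atTop, p n) (q : ℤ) :
    ∀ᶠ i : ℕ in atTop, p (q + i) :=
  (tendsto_atTop_add_const_left _ q tendsto_natCast_atTop_atTop).eventually hp

theorem sub_pow_smul_eq_zero_of_commute {R M : Type*} [Ring R] [AddCommGroup M] [Module R M]
    {x z : R} (hxz : Commute x z) {v : M} {a b c : ℕ} (hx : x ^ a • v = 0)
    (hzx : ((z - x) ^ b * z ^ c) • v = 0) : (z - x) ^ (b + (a + c)) • v = 0 := by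
  have hexp : (z - x) ^ (a + c) =
      ∑ i ∈ range (a + c + 1), z ^ i * (-x) ^ (a + c - i) * ((a + c).choose i : R) := by
    rw [sub_eq_add_neg]
    exact hxz.symm.neg_right.add_pow _
  rw [pow_add, hexp, mul_sum, sum_smul]
  refine sum_eq_zero fun i _ => ?_
  rw [← nsmul_eq_mul', mul_smul_comm, smul_assoc]
  refine smul_eq_zero_of_right _ ?_
  -- each term `z ^ i * (-x) ^ (a + c - i)` contains `x ^ a` or `z ^ c`
  rcases le_or_gt i c with hic | hic
  · rw [show a + c - i = (c - i) + a by omega, pow_add, neg_pow x a, ← mul_assoc, ← mul_assoc,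
      ← mul_assoc, mul_smul, mul_smul, hx, smul_zero, smul_zero]
  · have hzi : z ^ i = z ^ (i - c) * z ^ c := by rw [← pow_add, Nat.sub_add_cancel hic.le]
    have hzx' : Commute (z ^ c) ((-x) ^ (a + c - i)) := hxz.symm.neg_right.pow_pow _ _
    have hyz : Commute ((z - x) ^ b) (z ^ (i - c) * (-x) ^ (a + c - i)) :=
      (((Commute.refl z).sub_left hxz).pow_pow _ _).mul_right
        ((hxz.symm.sub_left (Commute.refl x)).neg_right.pow_pow _ _)
    have hcomm : (z - x) ^ b * (z ^ i * (-x) ^ (a + c - i)) =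
        (z ^ (i - c) * (-x) ^ (a + c - i)) * ((z - x) ^ b * z ^ c) := by
      rw [hzi, mul_assoc, hzx'.eq, ← mul_assoc, ← mul_assoc, mul_assoc _ (z ^ (i - c)), hyz.eq,
        mul_assoc]
    rw [hcomm, mul_smul, hzx, smul_zero]

/-- The coefficient of `X ^ (m - i) * Y ^ i` in `(α X + β Y) ^ m`, for `m : ℤ`. -/
noncomputable def binomCoeff (α β : ℂ) (m : ℤ) (i : ℕ) : ℂ := α ^ (m - i) * β ^ i * cchoose m i

lemma binomCoeff_succ_zero {α : ℂ} (hα : α ≠ 0) (β : ℂ) (m : ℤ) :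
    binomCoeff α β (m + 1) 0 = α * binomCoeff α β m 0 := by
  simp [binomCoeff, cchoose_eq_ringChoose, zpow_add_one₀ hα, mul_comm]

lemma binomCoeff_succ_succ {α : ℂ} (hα : α ≠ 0) (β : ℂ) (m : ℤ) (i : ℕ) :
    binomCoeff α β (m + 1) (i + 1) = α * binomCoeff α β m (i + 1) + β * binomCoeff α β m i := by
  have hexp : m + 1 - ((i + 1 : ℕ) : ℤ) = m - i := by push_cast; ring
  have hexp' : m - ((i + 1 : ℕ) : ℤ) + 1 = m - i := by push_cast; ring
  simp only [binomCoeff, cchoose_eq_ringChoose, Int.cast_add, Int.cast_one, Ring.choose_succ_succ,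
    hexp, ← hexp', zpow_add_one₀ hα, pow_succ]
  ring

lemma smul_sum_add_smul_sum_binomCoeff {W : Type*} [AddCommGroup W] [Module ℂ W] {α : ℂ}
    (hα : α ≠ 0) (β : ℂ) (m : ℤ) (G : ℕ → W) (T : ℕ) :
    α • ∑ i ∈ range (T + 1), binomCoeff α β m i • G i +
        β • ∑ i ∈ range T, binomCoeff α β m i • G (i + 1) =
      ∑ i ∈ range (T + 1), binomCoeff α β (m + 1) i • G i := by
  rw [sum_range_succ', sum_range_succ', smul_add, smul_sum, smul_sum, add_right_comm,
    ← sum_add_distrib, binomCoeff_succ_zero hα, mul_smul]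
  congr 1
  exact sum_congr rfl fun i _ => by rw [binomCoeff_succ_succ hα, add_smul, mul_smul, mul_smul]

section Shift

variable {ι W : Type*} [AddCommGroup ι] [AddCommGroup W] [Module ℂ W]

def shift (g : ι) : Module.End ℂ (ι → W) := LinearMap.funLeft ℂ W (· + g)

@[simp]
lemma shift_apply (g : ι) (F : ι → W) (x : ι) : shift g F x = F (x + g) := rfl

lemma shift_pow_apply (g : ι) (n : ℕ) (F : ι → W) (x : ι) :
    (shift g ^ n) F x = F (x + n • g) := by
  induction n generalizing x with
  | zero => simp
  | succ n ih => rw [pow_succ', Module.End.mul_apply, shift_apply, ih, add_assoc, succ_nsmul']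

lemma commute_shift (g h : ι) : Commute (shift g : Module.End ℂ (ι → W)) (shift h) := by
  ext F x
  simp only [Module.End.mul_apply, shift_apply, add_right_comm]

lemma commute_sub_shift (g h g' h' : ι) :
    Commute (shift g - shift h : Module.End ℂ (ι → W)) (shift g' - shift h') :=
  ((commute_shift g g').sub_right (commute_shift g h')).sub_left
    ((commute_shift h g').sub_right (commute_shift h h'))

lemma smul_shift_add_smul_shift_pow_apply (α β : ℂ) (u v : ι) (n : ℕ) (F : ι → W) (x : ι) :
    ((α • shift u + β • shift v : Module.End ℂ (ι → W)) ^ n) F x =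
      ∑ i ∈ range (n + 1),
        (α ^ (n - i) * β ^ i * n.choose i) • F (x + ((n : ℤ) - i) • u + i • v) := by
  rw [add_comm, ((commute_shift v u).smul_left β).smul_right α |>.add_pow, LinearMap.sum_apply,
    Finset.sum_apply]
  refine sum_congr rfl fun i hi => ?_
  have hin : i ≤ n := Nat.lt_succ_iff.mp (mem_range.mp hi)
  simp only [smul_pow, Module.End.mul_apply, LinearMap.smul_apply, Module.End.natCast_apply,
    Pi.smul_apply, shift_pow_apply, mul_smul, smul_comm (α ^ (n - i)), ← Nat.cast_smul_eq_nsmul ℂ]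
  congr 3
  rw [add_right_comm, ← natCast_zsmul, Nat.cast_sub hin]

lemma sub_shift_pow_apply (u v : ι) (n : ℕ) (F : ι → W) (x : ι) :
    ((shift u - shift v : Module.End ℂ (ι → W)) ^ n) F x =
      ∑ i ∈ range (n + 1), ((-1 : ℂ) ^ i * n.choose i) • F (x + ((n : ℤ) - i) • u + i • v) := by
  have e : (shift u - shift v : Module.End ℂ (ι → W)) = (1 : ℂ) • shift u + (-1 : ℂ) • shift v := by
    module
  simp only [e, smul_shift_add_smul_shift_pow_apply, one_pow, one_mul]

/-- `(α • shift u + β • shift v) ^ m` for `m : ℤ`, expanded in nonnegative powers of `shift v`. -/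
noncomputable def binomSeries (α β : ℂ) (m : ℤ) (u v : ι) (F : ι → W) (x : ι) : W :=
  ∑ᶠ i : ℕ, binomCoeff α β m i • F (x + (m - i) • u + i • v)

def vanishingAlong (u v : ι) : Submodule ℂ (ι → W) where
  carrier := {F | ∀ x, ∀ᶠ i : ℕ in atTop, ∀ n : ℤ, F (x + n • u + i • v) = 0}
  add_mem' hF hG x := ((hF x).and (hG x)).mono fun _ h n => by simp [h.1 n, h.2 n]
  zero_mem' _ := .of_forall fun _ _ => rfl
  smul_mem' c _ hF x := (hF x).mono fun _ h n => by simp [h n]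

variable {α β : ℂ} {u v : ι} {F G : ι → W}

lemma shift_mem_vanishingAlong (hF : F ∈ vanishingAlong u v) (g : ι) :
    shift g F ∈ vanishingAlong u v := fun x =>
  (hF (x + g)).mono fun i h n => by rw [shift_apply, ← h n]; congr 1; abel

lemma sub_shift_pow_mem_vanishingAlong (hF : F ∈ vanishingAlong u v) (g h : ι) (k : ℕ) :
    ((shift g - shift h : Module.End ℂ (ι → W)) ^ k) F ∈ vanishingAlong u v := by
  induction k with
  | zero => exact hF
  | succ k ih =>
    rw [pow_succ', Module.End.mul_apply, LinearMap.sub_apply]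
    exact sub_mem (shift_mem_vanishingAlong ih g) (shift_mem_vanishingAlong ih h)

lemma binomSeries_eq_sum {x : ι} {T : ℕ} (hT : ∀ i, T ≤ i → ∀ n : ℤ, F (x + n • u + i • v) = 0)
    (m : ℤ) : binomSeries α β m u v F x =
      ∑ i ∈ range T, binomCoeff α β m i • F (x + (m - i) • u + i • v) :=
  finsum_eq_sum_range fun i hi => by rw [hT i hi, smul_zero]

lemma binomSeries_shift (m : ℤ) (g : ι) :
    binomSeries α β m u v (shift g F) = shift g (binomSeries α β m u v F) := by
  funext x
  simp only [binomSeries, shift_apply]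
  exact finsum_congr fun i => by congr 2; abel

lemma binomSeries_sub (hF : F ∈ vanishingAlong u v) (hG : G ∈ vanishingAlong u v) (m : ℤ) :
    binomSeries α β m u v (F - G) = binomSeries α β m u v F - binomSeries α β m u v G := by
  funext x
  obtain ⟨T, hT⟩ := eventually_atTop.1 ((hF x).and (hG x))
  rw [Pi.sub_apply,
    binomSeries_eq_sum (T := T) (fun i hi n => by simp [(hT i hi).1 n, (hT i hi).2 n]),
    binomSeries_eq_sum (fun i hi => (hT i hi).1), binomSeries_eq_sum (fun i hi => (hT i hi).2),
    ← sum_sub_distrib]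
  simp only [Pi.sub_apply, smul_sub]

lemma sub_shift_pow_binomSeries (hF : F ∈ vanishingAlong u v) (m : ℤ) (g h : ι) (k : ℕ) :
    ((shift g - shift h : Module.End ℂ (ι → W)) ^ k) (binomSeries α β m u v F) =
      binomSeries α β m u v (((shift g - shift h : Module.End ℂ (ι → W)) ^ k) F) := by
  induction k with
  | zero => rfl
  | succ k ih =>
    have hk := sub_shift_pow_mem_vanishingAlong hF g h k
    rw [pow_succ', Module.End.mul_apply, ih, Module.End.mul_apply, LinearMap.sub_apply,
      LinearMap.sub_apply, binomSeries_sub (shift_mem_vanishingAlong hk g)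
        (shift_mem_vanishingAlong hk h), binomSeries_shift, binomSeries_shift]

lemma smul_shift_add_smul_shift_binomSeries (hα : α ≠ 0) (hF : F ∈ vanishingAlong u v) (m : ℤ) :
    (α • shift u + β • shift v : Module.End ℂ (ι → W)) (binomSeries α β m u v F) =
      binomSeries α β (m + 1) u v F := by
  funext x
  obtain ⟨T, hT⟩ := eventually_atTop.1 (hF x)
  have hu : binomSeries α β m u v F (x + u) =
      ∑ i ∈ range (T + 1), binomCoeff α β m i • F (x + (m + 1 - i) • u + i • v) := by
    rw [binomSeries, finsum_eq_sum_range fun i hi => ?_]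
    · exact sum_congr rfl fun i _ => by congr 2; module
    · rw [show x + u + (m - i) • u + i • v = x + (m + 1 - i) • u + i • v by module,
        hT i (by omega), smul_zero]
  have hv : binomSeries α β m u v F (x + v) =
      ∑ i ∈ range T, binomCoeff α β m i • F (x + (m + 1 - (i + 1 : ℕ)) • u + (i + 1) • v) := by
    rw [binomSeries, finsum_eq_sum_range fun i hi => ?_]
    · exact sum_congr rfl fun i _ => by congr 2; push_cast; module
    · rw [show x + v + (m - i) • u + i • v = x + (m + 1 - (i + 1 : ℕ)) • u + (i + 1) • v by
        push_cast; module, hT (i + 1) (by omega), smul_zero]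
  rw [binomSeries, finsum_eq_sum_range (T := T + 1) fun i hi => by rw [hT i (by omega), smul_zero],
    LinearMap.add_apply, LinearMap.smul_apply, LinearMap.smul_apply, Pi.add_apply, Pi.smul_apply,
    Pi.smul_apply, shift_apply, shift_apply, hu, hv]
  exact smul_sum_add_smul_sum_binomCoeff hα β m (fun i => F (x + (m + 1 - i) • u + i • v)) T

lemma smul_shift_add_smul_shift_pow_binomSeries (hα : α ≠ 0) (hF : F ∈ vanishingAlong u v)
    (m : ℤ) (k : ℕ) :
    ((α • shift u + β • shift v : Module.End ℂ (ι → W)) ^ k) (binomSeries α β m u v F) =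
      binomSeries α β (m + k) u v F := by
  induction k with
  | zero => simp
  | succ k ih =>
    rw [pow_succ', Module.End.mul_apply, ih, smul_shift_add_smul_shift_binomSeries hα hF]
    push_cast
    ring_nf

lemma binomSeries_natCast (n : ℕ) :
    binomSeries α β n u v F = ((α • shift u + β • shift v : Module.End ℂ (ι → W)) ^ n) F := by
  funext x
  rw [smul_shift_add_smul_shift_pow_apply, binomSeries,
    finsum_eq_sum_range (T := n + 1) fun i hi => by
      rw [binomCoeff, cchoose_natCast, Nat.choose_eq_zero_of_lt (by omega), Nat.cast_zero,
        mul_zero, zero_smul]]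
  refine sum_congr rfl fun i hi => ?_
  rw [binomCoeff, cchoose_natCast, ← Nat.cast_sub (Nat.lt_succ_iff.mp (mem_range.mp hi)),
    zpow_natCast]

/-- `(x - y) ^ m F - (-y + x) ^ m G`, each power expanded as in the residue formula. -/
noncomputable def binomSeriesDiff (m : ℤ) (u v : ι) (F G : ι → W) : ι → W :=
  binomSeries 1 (-1) m u v F - binomSeries (-1) 1 m v u G

lemma sub_shift_pow_binomSeries_of_add_eq (hF : F ∈ vanishingAlong u v) {m : ℤ} {k n : ℕ}
    (h : m + k = n) :
    ((shift u - shift v : Module.End ℂ (ι → W)) ^ k) (binomSeries 1 (-1) m u v F) =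
      ((shift u - shift v : Module.End ℂ (ι → W)) ^ n) F := by
  have e : (shift u - shift v : Module.End ℂ (ι → W)) = (1 : ℂ) • shift u + (-1 : ℂ) • shift v := by
    module
  rw [e, smul_shift_add_smul_shift_pow_binomSeries one_ne_zero hF, h, binomSeries_natCast]

lemma sub_shift_pow_binomSeries_swap_of_add_eq (hG : G ∈ vanishingAlong v u) {m : ℤ} {k n : ℕ}
    (h : m + k = n) :
    ((shift u - shift v : Module.End ℂ (ι → W)) ^ k) (binomSeries (-1) 1 m v u G) =
      ((shift u - shift v : Module.End ℂ (ι → W)) ^ n) G := by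
  have e : (shift u - shift v : Module.End ℂ (ι → W)) = (-1 : ℂ) • shift v + (1 : ℂ) • shift u := by
    module
  rw [e, smul_shift_add_smul_shift_pow_binomSeries (neg_ne_zero.mpr one_ne_zero) hG, h,
    binomSeries_natCast]

lemma sub_shift_pow_binomSeriesDiff_eq_zero (hF : F ∈ vanishingAlong u v)
    (hG : G ∈ vanishingAlong v u) {k : ℕ}
    (hFG : ((shift u - shift v : Module.End ℂ (ι → W)) ^ k) F =
      ((shift u - shift v : Module.End ℂ (ι → W)) ^ k) G) (m : ℤ) :
    ((shift u - shift v : Module.End ℂ (ι → W)) ^ (k + (-m).toNat)) (binomSeriesDiff m u v F G) =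
      0 := by
  have h : m + ((k + (-m).toNat : ℕ) : ℤ) = ((m.toNat + k : ℕ) : ℤ) := by omega
  rw [binomSeriesDiff, map_sub, sub_shift_pow_binomSeries_of_add_eq hF h,
    sub_shift_pow_binomSeries_swap_of_add_eq hG h, pow_add, Module.End.mul_apply,
    Module.End.mul_apply, hFG, sub_self]

lemma sub_shift_pow_binomSeriesDiff (hF : F ∈ vanishingAlong u v) (hG : G ∈ vanishingAlong v u)
    (m : ℤ) (g h : ι) (k : ℕ) :
    ((shift g - shift h : Module.End ℂ (ι → W)) ^ k) (binomSeriesDiff m u v F G) =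
      binomSeriesDiff m u v (((shift g - shift h : Module.End ℂ (ι → W)) ^ k) F)
        (((shift g - shift h : Module.End ℂ (ι → W)) ^ k) G) := by
  rw [binomSeriesDiff, map_sub, sub_shift_pow_binomSeries hF, sub_shift_pow_binomSeries hG,
    binomSeriesDiff]

end Shift

section ModeProduct

variable {W : Type*} [AddCommGroup W] [Module ℂ W]

/-- Locality in modes: the coefficient of `x₀ ^ (-p-1) y₀ ^ (-q-1)` in
`(x₀ - y₀) ^ k (a(x₀) b(y₀) - b(y₀) a(x₀)) w` vanishes. -/
def IsLocal (k : ℕ) (a b : ℤ → W → W) : Prop :=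
  ∀ (w : W) (p q : ℤ),
    ∑ t ∈ range (k + 1), ((-1 : ℂ) ^ t * (k.choose t : ℂ)) • a (p + (k - t)) (b (q + t) w) =
      ∑ t ∈ range (k + 1), ((-1 : ℂ) ^ t * (k.choose t : ℂ)) • b (q + t) (a (p + (k - t)) w)

lemma LocalTo.isLocal {r k : ℕ} {A B : ECoeff r W} (h : LocalTo k A B) (m n : Fin r → ℤ) :
    IsLocal k (fun j => A j m) (fun j => B j n) := by
  intro w p q
  simpa only [neg_neg, show ∀ t : ℕ, (k : ℤ) - t - (-p - 1) - 1 = p + (k - t) from fun t => by ring,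
    show ∀ t : ℕ, (t : ℤ) - (-q - 1) - 1 = q + t from fun t => by ring]
    using h w (-p - 1) (-q - 1) (-m) (-n)

noncomputable def modeProduct (a b : ℤ → W → W) (m0 n : ℤ) (v : W) : W :=
  (∑ᶠ i : ℕ, ((-1 : ℂ) ^ i * cchoose m0 i) • a (m0 - i) (b (n + i) v)) -
    ∑ᶠ j : ℕ, ((-1 : ℂ) ^ (m0 - (j : ℤ)) * cchoose m0 j) • b (m0 - j + n) (a j v)

-- The coordinates of `ℤ × ℤ × ℤ` are the modes of `a`, `b`, `c`, i.e. of `x₀`, `y₀`, `z₀`.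
local notation "e₁" => ((1, 0, 0) : ℤ × ℤ × ℤ)
local notation "e₂" => ((0, 1, 0) : ℤ × ℤ × ℤ)
local notation "e₃" => ((0, 0, 1) : ℤ × ℤ × ℤ)
local notation "D₁₂" => (shift e₁ - shift e₂ : Module.End ℂ (ℤ × ℤ × ℤ → _))
local notation "D₁₃" => (shift e₁ - shift e₃ : Module.End ℂ (ℤ × ℤ × ℤ → _))
local notation "D₂₃" => (shift e₂ - shift e₃ : Module.End ℂ (ℤ × ℤ × ℤ → _))

def word (f g h : ℤ × ℤ × ℤ → Module.End ℂ W) (w : W) (x : ℤ × ℤ × ℤ) : W := f x (g x (h x w))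

variable {a b c : ℤ → Module.End ℂ W}

lemma mem_vanishingAlong_e₁_e₂ (hb : ∀ v, ∀ᶠ n in atTop, b n v = 0)
    (L : ℤ × ℤ × ℤ → Module.End ℂ W) (R : ℤ → W) :
    (fun x => L x (b x.2.1 (R x.2.2))) ∈ vanishingAlong e₁ e₂ := fun x =>
  (eventually_add_natCast (hb (R x.2.2)) x.2.1).mono fun i hi n => by
    simp only [Prod.smul_mk, smul_eq_mul, nsmul_eq_mul, mul_one, mul_zero, Prod.fst_add,
      Prod.snd_add, add_zero, hi, map_zero]

lemma mem_vanishingAlong_e₂_e₁ (ha : ∀ v, ∀ᶠ n in atTop, a n v = 0)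
    (L : ℤ × ℤ × ℤ → Module.End ℂ W) (R : ℤ → W) :
    (fun x => L x (a x.1 (R x.2.2))) ∈ vanishingAlong e₂ e₁ := fun x =>
  (eventually_add_natCast (ha (R x.2.2)) x.1).mono fun i hi n => by
    simp only [Prod.smul_mk, smul_eq_mul, nsmul_eq_mul, mul_one, mul_zero, Prod.fst_add,
      Prod.snd_add, add_zero, hi, map_zero]

lemma word_mem_vanishingAlong (ha : ∀ v, ∀ᶠ n in atTop, a n v = 0)
    (hb : ∀ v, ∀ᶠ n in atTop, b n v = 0) (w : W) :
    word (a ·.1) (b ·.2.1) (c ·.2.2) w ∈ vanishingAlong e₁ e₂ ∧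
      word (b ·.2.1) (a ·.1) (c ·.2.2) w ∈ vanishingAlong e₂ e₁ ∧
      word (c ·.2.2) (a ·.1) (b ·.2.1) w ∈ vanishingAlong e₁ e₂ ∧
      word (c ·.2.2) (b ·.2.1) (a ·.1) w ∈ vanishingAlong e₂ e₁ :=
  ⟨mem_vanishingAlong_e₁_e₂ hb (a ·.1) (c · w), mem_vanishingAlong_e₂_e₁ ha (b ·.2.1) (c · w),
    mem_vanishingAlong_e₁_e₂ hb (fun x => c x.2.2 * a x.1) fun _ => w,
    mem_vanishingAlong_e₂_e₁ ha (fun x => c x.2.2 * b x.2.1) fun _ => w⟩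

variable (a b c) in
noncomputable def bracketArray (m0 : ℤ) (w : W) : ℤ × ℤ × ℤ → W :=
  binomSeriesDiff m0 e₁ e₂ (word (a ·.1) (b ·.2.1) (c ·.2.2) w)
      (word (b ·.2.1) (a ·.1) (c ·.2.2) w) -
    binomSeriesDiff m0 e₁ e₂ (word (c ·.2.2) (a ·.1) (b ·.2.1) w)
      (word (c ·.2.2) (b ·.2.1) (a ·.1) w)

lemma binomSeriesDiff_e₁_e₂_apply (m0 : ℤ) (F G : ℤ × ℤ × ℤ → W) (n s : ℤ) :
    binomSeriesDiff m0 e₁ e₂ F G (0, n, s) =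
      (∑ᶠ i : ℕ, ((-1 : ℂ) ^ i * cchoose m0 i) • F (m0 - i, n + i, s)) -
        ∑ᶠ j : ℕ, ((-1 : ℂ) ^ (m0 - (j : ℤ)) * cchoose m0 j) • G (j, m0 - j + n, s) := by
  simp only [binomSeriesDiff, binomSeries, binomCoeff, Pi.sub_apply, one_zpow, one_pow, one_mul,
    mul_one, Prod.smul_mk, smul_eq_mul, nsmul_eq_mul, mul_zero, Prod.mk_add_mk, add_zero, zero_add]
  congr 1
  exact finsum_congr fun j => by rw [add_comm n]

lemma bracketArray_apply (ha : ∀ v, ∀ᶠ n in atTop, a n v = 0)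
    (hb : ∀ v, ∀ᶠ n in atTop, b n v = 0) (m0 : ℤ) (w : W) (n s : ℤ) :
    bracketArray a b c m0 w (0, n, s) =
      modeProduct (a ·) (b ·) m0 n (c s w) - c s (modeProduct (a ·) (b ·) m0 n w) := by
  have hfin₁ : Function.HasFiniteSupport fun i : ℕ =>
      ((-1 : ℂ) ^ i * cchoose m0 i) • a (m0 - i) (b (n + i) w) :=
    hasFiniteSupport_of_eventually_eq_zero <|
      (eventually_add_natCast (hb w) n).mono fun i hi => by rw [hi, map_zero, smul_zero]
  have hfin₂ : Function.HasFiniteSupport fun j : ℕ =>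
      ((-1 : ℂ) ^ (m0 - (j : ℤ)) * cchoose m0 j) • b (m0 - j + n) (a j w) :=
    hasFiniteSupport_of_eventually_eq_zero <|
      (eventually_add_natCast (ha w) 0).mono fun j hj => by
        rw [zero_add] at hj; rw [hj, map_zero, smul_zero]
  rw [bracketArray, Pi.sub_apply, binomSeriesDiff_e₁_e₂_apply, binomSeriesDiff_e₁_e₂_apply,
    modeProduct, modeProduct, map_sub, map_finsum _ hfin₁, map_finsum _ hfin₂]
  simp only [map_smul]
  rfl

lemma D₁₂_pow_apply (k : ℕ) (F : ℤ × ℤ × ℤ → W) (p q s : ℤ) :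
    (D₁₂ ^ k) F (p, q, s) =
      ∑ t ∈ range (k + 1), ((-1 : ℂ) ^ t * k.choose t) • F (p + (k - t), q + t, s) := by
  simp only [sub_shift_pow_apply, Prod.smul_mk, smul_eq_mul, nsmul_eq_mul, mul_one, mul_zero,
    Prod.mk_add_mk, add_zero]

lemma D₁₃_pow_apply (k : ℕ) (F : ℤ × ℤ × ℤ → W) (p q s : ℤ) :
    (D₁₃ ^ k) F (p, q, s) =
      ∑ t ∈ range (k + 1), ((-1 : ℂ) ^ t * k.choose t) • F (p + (k - t), q, s + t) := by
  simp only [sub_shift_pow_apply, Prod.smul_mk, smul_eq_mul, nsmul_eq_mul, mul_one, mul_zero,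
    Prod.mk_add_mk, add_zero]

lemma D₂₃_pow_apply (k : ℕ) (F : ℤ × ℤ × ℤ → W) (p q s : ℤ) :
    (D₂₃ ^ k) F (p, q, s) =
      ∑ t ∈ range (k + 1), ((-1 : ℂ) ^ t * k.choose t) • F (p, q + (k - t), s + t) := by
  simp only [sub_shift_pow_apply, Prod.smul_mk, smul_eq_mul, nsmul_eq_mul, mul_one, mul_zero,
    Prod.mk_add_mk, add_zero]

lemma D₁₂_pow_bracketArray_eq_zero (ha : ∀ v, ∀ᶠ n in atTop, a n v = 0)
    (hb : ∀ v, ∀ᶠ n in atTop, b n v = 0) {kab : ℕ} (hab : IsLocal kab (a ·) (b ·)) (m0 : ℤ)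
    (w : W) : (D₁₂ ^ (kab + (-m0).toNat)) (bracketArray a b c m0 w) = 0 := by
  obtain ⟨habc, hbac, hcab, hcba⟩ := word_mem_vanishingAlong (c := c) ha hb w
  have inner : (D₁₂ ^ kab) (word (a ·.1) (b ·.2.1) (c ·.2.2) w) =
      (D₁₂ ^ kab) (word (b ·.2.1) (a ·.1) (c ·.2.2) w) := by
    funext ⟨p, q, s⟩
    simp only [D₁₂_pow_apply, word]
    exact hab (c s w) p q
  have outer : (D₁₂ ^ kab) (word (c ·.2.2) (a ·.1) (b ·.2.1) w) =
      (D₁₂ ^ kab) (word (c ·.2.2) (b ·.2.1) (a ·.1) w) := by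
    funext ⟨p, q, s⟩
    simp only [D₁₂_pow_apply, word]
    simpa only [map_sum, map_smul] using congrArg (c s) (hab w p q)
  rw [bracketArray, map_sub, sub_shift_pow_binomSeriesDiff_eq_zero habc hbac inner,
    sub_shift_pow_binomSeriesDiff_eq_zero hcab hcba outer, sub_zero]

lemma D₂₃_pow_D₁₃_pow_comm (kbc kac : ℕ) (F : ℤ × ℤ × ℤ → W) :
    (D₂₃ ^ kbc) ((D₁₃ ^ kac) F) = (D₁₃ ^ kac) ((D₂₃ ^ kbc) F) := by
  rw [← Module.End.mul_apply, ((commute_sub_shift _ _ _ _).pow_pow _ _).eq, Module.End.mul_apply]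

lemma D₂₃_pow_D₁₃_pow_word_abc {kac kbc : ℕ} (hac : IsLocal kac (a ·) (c ·))
    (hbc : IsLocal kbc (b ·) (c ·)) (w : W) :
    (D₂₃ ^ kbc) ((D₁₃ ^ kac) (word (a ·.1) (b ·.2.1) (c ·.2.2) w)) =
      (D₂₃ ^ kbc) ((D₁₃ ^ kac) (word (c ·.2.2) (a ·.1) (b ·.2.1) w)) := by
  have hbc_outer : (D₂₃ ^ kbc) (word (a ·.1) (b ·.2.1) (c ·.2.2) w) =
      (D₂₃ ^ kbc) (word (a ·.1) (c ·.2.2) (b ·.2.1) w) := by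
    funext ⟨p, q, s⟩
    simp only [D₂₃_pow_apply, word]
    simpa only [map_sum, map_smul] using congrArg (a p) (hbc w q s)
  have hac_inner : (D₁₃ ^ kac) (word (a ·.1) (c ·.2.2) (b ·.2.1) w) =
      (D₁₃ ^ kac) (word (c ·.2.2) (a ·.1) (b ·.2.1) w) := by
    funext ⟨p, q, s⟩
    simp only [D₁₃_pow_apply, word]
    exact hac (b q w) p s
  rw [D₂₃_pow_D₁₃_pow_comm, hbc_outer, ← D₂₃_pow_D₁₃_pow_comm, hac_inner]

lemma D₂₃_pow_D₁₃_pow_word_bac {kac kbc : ℕ} (hac : IsLocal kac (a ·) (c ·))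
    (hbc : IsLocal kbc (b ·) (c ·)) (w : W) :
    (D₂₃ ^ kbc) ((D₁₃ ^ kac) (word (b ·.2.1) (a ·.1) (c ·.2.2) w)) =
      (D₂₃ ^ kbc) ((D₁₃ ^ kac) (word (c ·.2.2) (b ·.2.1) (a ·.1) w)) := by
  have hac_outer : (D₁₃ ^ kac) (word (b ·.2.1) (a ·.1) (c ·.2.2) w) =
      (D₁₃ ^ kac) (word (b ·.2.1) (c ·.2.2) (a ·.1) w) := by
    funext ⟨p, q, s⟩
    simp only [D₁₃_pow_apply, word]
    simpa only [map_sum, map_smul] using congrArg (b q) (hac w p s)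
  have hbc_inner : (D₂₃ ^ kbc) (word (b ·.2.1) (c ·.2.2) (a ·.1) w) =
      (D₂₃ ^ kbc) (word (c ·.2.2) (b ·.2.1) (a ·.1) w) := by
    funext ⟨p, q, s⟩
    simp only [D₂₃_pow_apply, word]
    exact hbc (a p w) q s
  rw [hac_outer, D₂₃_pow_D₁₃_pow_comm, hbc_inner, ← D₂₃_pow_D₁₃_pow_comm]

lemma D₂₃_pow_D₁₃_pow_bracketArray_eq_zero (ha : ∀ v, ∀ᶠ n in atTop, a n v = 0)
    (hb : ∀ v, ∀ᶠ n in atTop, b n v = 0) {kac kbc : ℕ} (hac : IsLocal kac (a ·) (c ·))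
    (hbc : IsLocal kbc (b ·) (c ·)) (m0 : ℤ) (w : W) :
    (D₂₃ ^ kbc) ((D₁₃ ^ kac) (bracketArray a b c m0 w)) = 0 := by
  obtain ⟨habc, hbac, hcab, hcba⟩ := word_mem_vanishingAlong (c := c) ha hb w
  rw [bracketArray, map_sub, map_sub, sub_shift_pow_binomSeriesDiff habc hbac,
    sub_shift_pow_binomSeriesDiff hcab hcba,
    sub_shift_pow_binomSeriesDiff (sub_shift_pow_mem_vanishingAlong habc _ _ _)
      (sub_shift_pow_mem_vanishingAlong hbac _ _ _),
    sub_shift_pow_binomSeriesDiff (sub_shift_pow_mem_vanishingAlong hcab _ _ _)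
      (sub_shift_pow_mem_vanishingAlong hcba _ _ _),
    D₂₃_pow_D₁₃_pow_word_abc hac hbc, D₂₃_pow_D₁₃_pow_word_bac hac hbc, sub_self]

lemma D₂₃_pow_bracketArray_eq_zero (ha : ∀ v, ∀ᶠ n in atTop, a n v = 0)
    (hb : ∀ v, ∀ᶠ n in atTop, b n v = 0) {kab kac kbc : ℕ} (hab : IsLocal kab (a ·) (b ·))
    (hac : IsLocal kac (a ·) (c ·)) (hbc : IsLocal kbc (b ·) (c ·)) (m0 : ℤ) (w : W) :
    (D₂₃ ^ (kbc + (kab + (-m0).toNat + kac))) (bracketArray a b c m0 w) = 0 := by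
  have h := sub_pow_smul_eq_zero_of_commute (commute_sub_shift (W := W) e₁ e₂ e₁ e₃)
    (v := bracketArray a b c m0 w) (D₁₂_pow_bracketArray_eq_zero ha hb hab m0 w) (by
      rw [sub_sub_sub_cancel_left, Module.End.smul_def, Module.End.mul_apply]
      exact D₂₃_pow_D₁₃_pow_bracketArray_eq_zero ha hb hac hbc m0 w)
  rwa [sub_sub_sub_cancel_left] at h

theorem isLocal_modeProduct (ha : ∀ v, ∀ᶠ n in atTop, a n v = 0)
    (hb : ∀ v, ∀ᶠ n in atTop, b n v = 0) {kab kac kbc : ℕ} (hab : IsLocal kab (a ·) (b ·))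
    (hac : IsLocal kac (a ·) (c ·)) (hbc : IsLocal kbc (b ·) (c ·)) (m0 : ℤ) :
    IsLocal (kbc + (kab + (-m0).toNat + kac)) (modeProduct (a ·) (b ·) m0) (c ·) := by
  intro w p q
  have h := congrFun (D₂₃_pow_bracketArray_eq_zero ha hb hab hac hbc m0 w) (0, p, q)
  simp only [D₂₃_pow_apply, bracketArray_apply ha hb, smul_sub, sum_sub_distrib] at h
  exact sub_eq_zero.mp h

end ModeProduct

lemma ETrunc.eventually_eq_zero {r : ℕ} {W : Type*} [AddCommGroup W] {A : ECoeff r W}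
    (h : ETrunc A) (m : Fin r → ℤ) (v : W) : ∀ᶠ n in atTop, A n m v = 0 :=
  eventually_atTop.2 ((h v).imp fun _ hN n hn => hN n hn m)

theorem stmt13_general {r : ℕ} {W : Type*} [AddCommGroup W] [Module ℂ W]
    (A B C : ECoeff r W)
    (hAlin : ∀ n m, IsLinearMap ℂ (A n m)) (hBlin : ∀ n m, IsLinearMap ℂ (B n m))
    (hClin : ∀ n m, IsLinearMap ℂ (C n m))
    (hAtr : ETrunc A) (hBtr : ETrunc B)
    (hab : ∃ k, LocalTo k A B) (hac : ∃ k, LocalTo k A C)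
    (hbc : ∃ k, LocalTo k B C) :
    ∀ (m0 : ℤ) (m : Fin r → ℤ), ∃ K : ℕ, LocalTo K (prodCoeff A B m0 m) C := by
  intro m0 m
  obtain ⟨kab, hab⟩ := hab
  obtain ⟨kac, hac⟩ := hac
  obtain ⟨kbc, hbc⟩ := hbc
  refine ⟨kbc + (kab + (-m0).toNat + kac), fun w P Q M N => ?_⟩
  have key := isLocal_modeProduct (a := fun n => (hAlin n m).mk')
    (b := fun n => (hBlin n (-M - m)).mk') (c := fun n => (hClin n (-N)).mk')
    (hAtr.eventually_eq_zero m) (hBtr.eventually_eq_zero (-M - m)) (hab.isLocal m (-M - m))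
    (hac.isLocal m (-N)) (hbc.isLocal (-M - m) (-N)) m0 w (-P - 1) (-Q - 1)
  simp only [show ∀ t : ℕ, ((kbc + (kab + (-m0).toNat + kac) : ℕ) : ℤ) - t - P - 1 =
      -P - 1 + ((kbc + (kab + (-m0).toNat + kac) : ℕ) - t) from fun t => by ring,
    show ∀ t : ℕ, (t : ℤ) - Q - 1 = -Q - 1 + t from fun t => by ring]
  -- `prodCoeff A B m0 m n (-M)` is `modeProduct (A · m) (B · (-M - m)) m0 n` by definition
  exact key

/-- If `a, b, c ∈ E(W,r)` are pairwise mutually local, then for any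
`(m0, m) ∈ ℤ × ℤ^r` the element `a_{m0,m}b` of `E(W,r)` is mutually local
with `c`. -/
theorem stmt13 {r : ℕ} {W : Type*} [AddCommGroup W] [Module ℂ W]
    (A B C : ECoeff r W)
    (hAlin : ∀ n m, IsLinearMap ℂ (A n m)) (hBlin : ∀ n m, IsLinearMap ℂ (B n m))
    (hClin : ∀ n m, IsLinearMap ℂ (C n m))
    (hAtr : ETrunc A) (hBtr : ETrunc B) (hCtr : ETrunc C)
    (hab : ∃ k, LocalTo k A B) (hac : ∃ k, LocalTo k A C)
    (hbc : ∃ k, LocalTo k B C) :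
    ∀ (m0 : ℤ) (m : Fin r → ℤ), ∃ K : ℕ, LocalTo K (prodCoeff A B m0 m) C :=
  stmt13_general A B C hAlin hBlin hClin hAtr hBtr hab hac hbc
end

section
/- Let g be a Lie algebra with symmetric invariant bilinear form ⟨·,·⟩ and let ℓ ∈ ℂ. Then the vector space g ⊕ ℂ carries a module structure over the Lie algebra L̂_+ ⊕ ℂk, where L̂_+ = g ⊗ ℂ[t0, t1^{±1},…,tr^{±1}], uniquely determined by: k acts as ℓ, (a⊗t0^j t^m)·1 = 0 for all j ≥ 0, and (a⊗t0^j t^m)·b = [a,b] if j = 0, = ⟨a,b⟩ℓ if j = 1, and = 0 if j ≥ 2, for a, b ∈ g, m ∈ ℤ^r. Moreover this module is ℕ-graded with ℂ in degree 0 and g in degree 1. -/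
/-!
The action of `X ∈ L̂_+ ⊕ ℂk` on `g ⊕ ℂ` only sees the `g`-coefficients of `t0^0` and `t0^1`
in `X` (after setting `t1 = ⋯ = tr = 1`) and the `k`-component of `X`; in particular it is
bilinear. The elements `a ⊗ t0^i t^m` with `i ≥ 0` together with `k` span `L̂_+ ⊕ ℂk`, so both
uniqueness and compatibility with the bracket reduce to these generators. Since `k` is central
and acts by a scalar, only pairs `a ⊗ t0^i t^m`, `b ⊗ t0^j t^n` remain: their cocycle term
vanishes (`i + j = 0` forces `i = 0`), the `g`-component of the identity is the Jacobi identity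
(`i = j = 0`), and the `ℂ`-component is the invariance of `⟨·,·⟩` (`{i, j} = {0, 1}`).
-/

/-- The underlying space of the `(r+1)`-toroidal Lie algebra
`L̂ = (g ⊗ ℂ[t0^{±1}, t1^{±1}, …, tr^{±1}]) ⊕ ℂk`: a Laurent polynomial with
coefficients in `g` is a finitely supported function `(Fin (r+1) → ℤ) →₀ g`
(recording the coefficient of `t0^{μ 0} t1^{μ 1} ⋯ tr^{μ r}`), and the second
factor records the coefficient of the central element `k`. -/
abbrev TorL (r : ℕ) (g : Type*) [AddCommGroup g] := ((Fin (r+1) → ℤ) →₀ g) × ℂ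

/-- The bracket of the `(r+1)`-toroidal Lie algebra:
`[a⊗t0^{m0}t^m, b⊗t0^{n0}t^n]
  = [a,b]⊗t0^{m0+n0}t^{m+n} + m0 ⟨a,b⟩ δ_{m0+n0,0} δ_{m+n,0} k`,
with `k` central. -/
noncomputable def torBracket (r : ℕ) (g : Type*) [LieRing g] [LieAlgebra ℂ g]
    (B : g →ₗ[ℂ] g →ₗ[ℂ] ℂ) : TorL r g → TorL r g → TorL r g :=
  fun x y =>
    ( x.1.sum fun μ a => y.1.sum fun ν b => Finsupp.single (μ + ν) ⁅a, b⁆,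
      x.1.sum fun μ a => y.1.sum fun ν b =>
        if μ + ν = 0 then ((μ 0 : ℂ)) * B a b else 0 )

/-- The action of `L̂_+ ⊕ ℂk` (elements of `L̂` supported on nonnegative powers
of `t0`) on `g ⊕ ℂ`, with `k` acting as the scalar `ℓ`:
`(a⊗t0^j t^m)·b = [a,b]` if `j = 0`, `⟨a,b⟩ℓ` if `j = 1`, `0` if `j ≥ 2`, and
`(a⊗t0^j t^m)·1 = 0`. -/
noncomputable def torAct (r : ℕ) (g : Type*) [LieRing g] [LieAlgebra ℂ g]
    (B : g →ₗ[ℂ] g →ₗ[ℂ] ℂ) (ℓ : ℂ) : TorL r g → g × ℂ → g × ℂ :=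
  fun X v =>
    ( (X.1.sum fun μ a => if μ 0 = 0 then ⁅a, v.1⁆ else 0) + (X.2 * ℓ) • v.1,
      (X.1.sum fun μ a => if μ 0 = 1 then ℓ * B a v.1 else 0) + X.2 * ℓ * v.2 )

/-- Membership in the subalgebra `L̂_+ ⊕ ℂk`: support on nonnegative `t0`-powers. -/
def TorPos {r : ℕ} {g : Type*} [AddCommGroup g] (X : TorL r g) : Prop :=
  ∀ μ ∈ X.1.support, 0 ≤ μ 0

section t0Coeff
variable {r : ℕ} {M : Type*} [AddCommMonoid M]

/-- The coefficient of `t0^j` evaluated at `t1 = ⋯ = tr = 1`. -/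
noncomputable def t0Coeff (j : ℤ) (f : (Fin (r+1) → ℤ) →₀ M) : M :=
  Finsupp.mapDomain (fun μ => μ 0) f j

lemma t0Coeff_eq_sum (j : ℤ) (f : (Fin (r+1) → ℤ) →₀ M) :
    t0Coeff j f = f.sum fun μ a => if μ 0 = j then a else 0 := by
  simp [t0Coeff, Finsupp.mapDomain, Finsupp.sum_apply, Finsupp.single_apply]

lemma t0Coeff_single (j : ℤ) (μ : Fin (r+1) → ℤ) (a : M) :
    t0Coeff j (Finsupp.single μ a) = if μ 0 = j then a else 0 := by
  simp [t0Coeff, Finsupp.mapDomain_single, Finsupp.single_apply]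

lemma t0Coeff_add (j : ℤ) (f f' : (Fin (r+1) → ℤ) →₀ M) :
    t0Coeff j (f + f') = t0Coeff j f + t0Coeff j f' := by
  simp [t0Coeff, Finsupp.mapDomain_add]

lemma t0Coeff_smul {R : Type*} [Semiring R] [Module R M] (j : ℤ) (c : R)
    (f : (Fin (r+1) → ℤ) →₀ M) : t0Coeff j (c • f) = c • t0Coeff j f := by
  simp [t0Coeff, Finsupp.mapDomain_smul]

end t0Coeff

section
variable {r : ℕ} {g : Type*} [LieRing g] [LieAlgebra ℂ g] (B : g →ₗ[ℂ] g →ₗ[ℂ] ℂ) (ℓ : ℂ)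

lemma torAct_eq (X : TorL r g) (v : g × ℂ) :
    torAct r g B ℓ X v = (⁅t0Coeff 0 X.1, v.1⁆ + (X.2 * ℓ) • v.1,
      ℓ * B (t0Coeff 1 X.1) v.1 + X.2 * ℓ * v.2) := by
  simp only [torAct, t0Coeff_eq_sum, Finsupp.sum, sum_lie, map_sum, LinearMap.sum_apply,
    Finset.mul_sum]
  congr 2 <;> refine Finset.sum_congr rfl fun μ _ => ?_ <;> split_ifs <;> simp

lemma torAct_single (μ : Fin (r+1) → ℤ) (a b : g) (c : ℂ) :
    torAct r g B ℓ (Finsupp.single μ a, 0) (b, c)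
      = (if μ 0 = 0 then ⁅a, b⁆ else 0, if μ 0 = 1 then ℓ * B a b else 0) := by
  simp only [torAct_eq, t0Coeff_single]
  split_ifs <;> simp

lemma torAct_central (s : ℂ) (v : g × ℂ) :
    torAct r g B ℓ (0, s) v = (s * ℓ) • v := by
  simp [torAct_eq, t0Coeff, Prod.smul_def, mul_assoc]

lemma torAct_zero_left (v : g × ℂ) : torAct r g B ℓ 0 v = 0 := by
  simp [torAct_eq, t0Coeff]

lemma torAct_add_left (X Y : TorL r g) (v : g × ℂ) :
    torAct r g B ℓ (X + Y) v = torAct r g B ℓ X v + torAct r g B ℓ Y v := by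
  simp only [torAct_eq, Prod.fst_add, Prod.snd_add, t0Coeff_add, add_lie, map_add,
    LinearMap.add_apply, Prod.mk_add_mk, add_mul, add_smul, Prod.mk.injEq]
  exact ⟨by abel, by ring⟩

lemma torAct_smul_left (c : ℂ) (X : TorL r g) (v : g × ℂ) :
    torAct r g B ℓ (c • X) v = c • torAct r g B ℓ X v := by
  simp only [torAct_eq, Prod.smul_fst, Prod.smul_snd, t0Coeff_smul, smul_lie, map_smul,
    LinearMap.smul_apply, smul_eq_mul, Prod.smul_mk, smul_add, mul_smul, Prod.mk.injEq, true_and]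
  ring

lemma torAct_add_right (X : TorL r g) (v w : g × ℂ) :
    torAct r g B ℓ X (v + w) = torAct r g B ℓ X v + torAct r g B ℓ X w := by
  simp only [torAct_eq, Prod.fst_add, Prod.snd_add, lie_add, map_add, smul_add, mul_add,
    Prod.mk_add_mk, Prod.mk.injEq]
  exact ⟨by abel, by ring⟩

lemma torAct_smul_right (X : TorL r g) (c : ℂ) (v : g × ℂ) :
    torAct r g B ℓ X (c • v) = c • torAct r g B ℓ X v := by
  simp only [torAct_eq, Prod.smul_fst, Prod.smul_snd, lie_smul, map_smul, smul_eq_mul,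
    Prod.smul_mk, smul_add, smul_comm c, Prod.mk.injEq, true_and]
  ring

lemma isLinearMap_torAct (X : TorL r g) : IsLinearMap ℂ (torAct r g B ℓ X) :=
  ⟨torAct_add_right B ℓ X, torAct_smul_right B ℓ X⟩

lemma isLinearMap_torAct_apply (v : g × ℂ) :
    IsLinearMap ℂ fun X : TorL r g => torAct r g B ℓ X v :=
  ⟨fun X Y => torAct_add_left B ℓ X Y v, fun c X => torAct_smul_left B ℓ c X v⟩

lemma torBracket_single_single (μ ν : Fin (r+1) → ℤ) (a b : g) :
    torBracket r g B (Finsupp.single μ a, 0) (Finsupp.single ν b, 0)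
      = (Finsupp.single (μ + ν) ⁅a, b⁆, if μ + ν = 0 then (μ 0 : ℂ) * B a b else 0) := by
  simp [torBracket]

lemma torBracket_central_left (s : ℂ) (Y : TorL r g) : torBracket r g B (0, s) Y = 0 := by
  simp [torBracket]

lemma torBracket_central_right (X : TorL r g) (t : ℂ) : torBracket r g B X (0, t) = 0 := by
  simp [torBracket]

lemma torBracket_add_left (X Y Z : TorL r g) :
    torBracket r g B (X + Y) Z = torBracket r g B X Z + torBracket r g B Y Z := by
  simp only [torBracket, Prod.fst_add, Prod.mk_add_mk]
  congr 1 <;> refine Finsupp.sum_add_index' (by simp) fun μ a a' => ?_ <;>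
    rw [← Finsupp.sum_add] <;> refine Finsupp.sum_congr fun ν _ => ?_
  · simp [add_lie, Finsupp.single_add]
  · split_ifs <;> simp [mul_add]

lemma torBracket_add_right (X Y Z : TorL r g) :
    torBracket r g B X (Y + Z) = torBracket r g B X Y + torBracket r g B X Z := by
  simp only [torBracket, Prod.fst_add, Prod.mk_add_mk]
  congr 1 <;> rw [← Finsupp.sum_add] <;> refine Finsupp.sum_congr fun μ _ => ?_ <;>
    refine Finsupp.sum_add_index' (by simp) fun ν b b' => ?_
  · simp [lie_add, Finsupp.single_add]
  · split_ifs <;> simp [mul_add]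

lemma torAct_torBracket_single_single (hinv : ∀ a b c : g, B ⁅a, b⁆ c = B a ⁅b, c⁆)
    {μ ν : Fin (r+1) → ℤ} (hμ : 0 ≤ μ 0) (hν : 0 ≤ ν 0) (a b : g) (v : g × ℂ) :
    torAct r g B ℓ (torBracket r g B (Finsupp.single μ a, 0) (Finsupp.single ν b, 0)) v
      = torAct r g B ℓ (Finsupp.single μ a, 0) (torAct r g B ℓ (Finsupp.single ν b, 0) v)
        - torAct r g B ℓ (Finsupp.single ν b, 0) (torAct r g B ℓ (Finsupp.single μ a, 0) v) := by
  have hcentral : (if μ + ν = 0 then (μ 0 : ℂ) * B a b else 0) = 0 := by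
    split_ifs with h
    · have hμν : μ 0 + ν 0 = 0 := by simpa using congrFun h 0
      simp [show μ 0 = 0 by omega]
    · rfl
  obtain ⟨v1, v2⟩ := v
  have hskew : B ⁅a, b⁆ v1 = -B b ⁅a, v1⁆ := by
    rw [← lie_skew, map_neg, LinearMap.neg_apply, hinv]
  simp only [torBracket_single_single, hcentral, torAct_single, Pi.add_apply, Prod.mk_sub_mk,
    Prod.mk.injEq]
  constructor
  · split_ifs <;> first | omega | simp [lie_lie]
  · split_ifs <;> first | omega | (simp [hinv]; done) | simp [hskew]

lemma torAct_torBracket_central_left (s : ℂ) (Y : TorL r g) (v : g × ℂ) :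
    torAct r g B ℓ (torBracket r g B (0, s) Y) v
      = torAct r g B ℓ (0, s) (torAct r g B ℓ Y v) - torAct r g B ℓ Y (torAct r g B ℓ (0, s) v) := by
  rw [torBracket_central_left, torAct_central, torAct_central, torAct_smul_right, sub_self,
    torAct_zero_left]

lemma torAct_torBracket_central_right (X : TorL r g) (t : ℂ) (v : g × ℂ) :
    torAct r g B ℓ (torBracket r g B X (0, t)) v
      = torAct r g B ℓ X (torAct r g B ℓ (0, t) v) - torAct r g B ℓ (0, t) (torAct r g B ℓ X v) := by
  rw [torBracket_central_right, torAct_central, torAct_central, torAct_smul_right, sub_self,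
    torAct_zero_left]

end

@[elab_as_elim]
lemma TorPos.induction_on {r : ℕ} {g : Type*} [AddCommGroup g] {P : TorL r g → Prop}
    {X : TorL r g} (hX : TorPos X) (central : ∀ s : ℂ, P (0, s))
    (single : ∀ μ a, 0 ≤ μ 0 → P (Finsupp.single μ a, 0))
    (add : ∀ X Y, P X → P Y → P (X + Y)) : P X := by
  have hdecomp : X = (∑ μ ∈ X.1.support, (Finsupp.single μ (X.1 μ), 0)) + (0, X.2) := by
    ext : 1
    · simp only [Prod.fst_add, Prod.fst_sum, add_zero]
      exact (Finsupp.sum_single X.1).symm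
    · simp [Prod.snd_sum]
  rw [hdecomp]
  refine add _ _ (Finset.sum_induction _ P add ?_ fun μ hμ => single μ _ (hX μ hμ)) (central _)
  exact central 0

section
variable {r : ℕ} {g : Type*} [LieRing g] [LieAlgebra ℂ g] (B : g →ₗ[ℂ] g →ₗ[ℂ] ℂ) (ℓ : ℂ)

lemma torAct_torBracket (hinv : ∀ a b c : g, B ⁅a, b⁆ c = B a ⁅b, c⁆)
    {X Y : TorL r g} (hX : TorPos X) (hY : TorPos Y) (v : g × ℂ) :
    torAct r g B ℓ (torBracket r g B X Y) v
      = torAct r g B ℓ X (torAct r g B ℓ Y v) - torAct r g B ℓ Y (torAct r g B ℓ X v) := by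
  revert v
  refine TorPos.induction_on hX (fun s v => torAct_torBracket_central_left B ℓ s Y v)
    (fun μ a hμ => ?_) fun X X' ihX ihX' v => ?_
  · refine TorPos.induction_on hY (fun t v => torAct_torBracket_central_right B ℓ _ t v)
      (fun ν b hν v => torAct_torBracket_single_single B ℓ hinv hμ hν a b v)
      fun Y Y' ihY ihY' v => ?_
    rw [torBracket_add_right, torAct_add_left, ihY, ihY', torAct_add_left, torAct_add_left,
      torAct_add_right]
    abel
  · rw [torBracket_add_left, torAct_add_left, ihX, ihX', torAct_add_left, torAct_add_left,
      torAct_add_right]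
    abel

lemma eq_torAct_of_generators (φ : TorL r g → g × ℂ → g × ℂ)
    (hlin : ∀ v : g × ℂ, IsLinearMap ℂ fun X : TorL r g => φ X v)
    (hsingle : ∀ (μ : Fin (r+1) → ℤ) (a : g), 0 ≤ μ 0 → ∀ (b : g) (c : ℂ),
      φ (Finsupp.single μ a, 0) (b, c)
        = (if μ 0 = 0 then ⁅a, b⁆ else 0, if μ 0 = 1 then ℓ * B a b else 0))
    (hcentral : ∀ v : g × ℂ, φ (0, 1) v = ℓ • v) {X : TorL r g} (hX : TorPos X) :
    φ X = torAct r g B ℓ X := by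
  funext v
  refine TorPos.induction_on hX (fun s => ?_) (fun μ a hμ => ?_) fun X X' ihX ihX' => ?_
  · have hs : ((0, s) : TorL r g) = s • (0, 1) := by simp
    rw [hs, (hlin v).map_smul, hcentral, torAct_smul_left, torAct_central, one_mul]
  · rw [hsingle μ a hμ, torAct_single]
  · rw [(hlin v).map_add, ihX, ihX', torAct_add_left]

end

theorem stmt17_general (r : ℕ) (g : Type*) [LieRing g] [LieAlgebra ℂ g]
    (B : g →ₗ[ℂ] g →ₗ[ℂ] ℂ)
    (hinv : ∀ a b c : g, B ⁅a, b⁆ c = B a ⁅b, c⁆)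
    (ℓ : ℂ) :
    -- generator formulas
    (∀ (μ : Fin (r+1) → ℤ) (a b : g) (c2 : ℂ),
      torAct r g B ℓ (Finsupp.single μ a, 0) (b, c2)
        = (if μ 0 = 0 then ⁅a, b⁆ else 0, if μ 0 = 1 then ℓ * B a b else 0)) ∧
    (∀ v : g × ℂ, torAct r g B ℓ (0, 1) v = ℓ • v) ∧
    -- bilinearity
    (∀ X : TorL r g, IsLinearMap ℂ (torAct r g B ℓ X)) ∧
    (∀ v : g × ℂ, IsLinearMap ℂ (fun X : TorL r g => torAct r g B ℓ X v)) ∧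
    -- module compatibility with the bracket, on the subalgebra
    (∀ X Y : TorL r g, TorPos X → TorPos Y → ∀ v : g × ℂ,
      torAct r g B ℓ (torBracket r g B X Y) v
        = torAct r g B ℓ X (torAct r g B ℓ Y v)
          - torAct r g B ℓ Y (torAct r g B ℓ X v)) ∧
    -- uniqueness
    (∀ φ : TorL r g → g × ℂ → g × ℂ,
      (∀ v : g × ℂ, IsLinearMap ℂ (fun X : TorL r g => φ X v)) →
      (∀ (μ : Fin (r+1) → ℤ) (a : g), 0 ≤ μ 0 → ∀ (b : g) (c2 : ℂ),
        φ (Finsupp.single μ a, 0) (b, c2)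
          = (if μ 0 = 0 then ⁅a, b⁆ else 0, if μ 0 = 1 then ℓ * B a b else 0)) →
      (∀ v : g × ℂ, φ (0, 1) v = ℓ • v) →
      ∀ X : TorL r g, TorPos X → φ X = torAct r g B ℓ X) ∧
    -- ℕ-grading: ℂ in degree 0, g in degree 1
    (∀ (μ : Fin (r+1) → ℤ) (a : g) (c2 : ℂ),
      torAct r g B ℓ (Finsupp.single μ a, 0) (0, c2) = 0) ∧
    (∀ (μ : Fin (r+1) → ℤ) (a b : g), 2 ≤ μ 0 →
      torAct r g B ℓ (Finsupp.single μ a, 0) (b, 0) = 0) ∧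
    (∀ (μ : Fin (r+1) → ℤ) (a b : g), μ 0 = 0 →
      (torAct r g B ℓ (Finsupp.single μ a, 0) (b, 0)).2 = 0) ∧
    (∀ (μ : Fin (r+1) → ℤ) (a b : g), μ 0 = 1 →
      (torAct r g B ℓ (Finsupp.single μ a, 0) (b, 0)).1 = 0) := by
  refine ⟨torAct_single B ℓ, fun v => by rw [torAct_central, one_mul], isLinearMap_torAct B ℓ,
    isLinearMap_torAct_apply B ℓ, fun X Y hX hY => torAct_torBracket B ℓ hinv hX hY,
    fun φ hlin hsingle hcentral X => eq_torAct_of_generators B ℓ φ hlin hsingle hcentral,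
    fun μ a c => by simp [torAct_single], ?_, ?_, ?_⟩
  · intro μ a b hμ
    simp [torAct_single, show μ 0 ≠ 0 by omega, show μ 0 ≠ 1 by omega]
  all_goals intro μ a b hμ; simp [torAct_single, hμ]

/-- `g ⊕ ℂ` carries a module structure over `L̂_+ ⊕ ℂk`, uniquely determined by
the listed formulas on generators, with `k` acting as `ℓ`; moreover the module
is ℕ-graded with `ℂ` in degree 0 and `g` in degree 1. -/
theorem stmt17 (r : ℕ) (g : Type*) [LieRing g] [LieAlgebra ℂ g]
    (B : g →ₗ[ℂ] g →ₗ[ℂ] ℂ)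
    (hsymm : ∀ a b : g, B a b = B b a)
    (hinv : ∀ a b c : g, B ⁅a, b⁆ c = B a ⁅b, c⁆)
    (ℓ : ℂ) :
    -- generator formulas
    (∀ (μ : Fin (r+1) → ℤ) (a b : g) (c2 : ℂ),
      torAct r g B ℓ (Finsupp.single μ a, 0) (b, c2)
        = (if μ 0 = 0 then ⁅a, b⁆ else 0, if μ 0 = 1 then ℓ * B a b else 0)) ∧
    (∀ v : g × ℂ, torAct r g B ℓ (0, 1) v = ℓ • v) ∧
    -- bilinearity
    (∀ X : TorL r g, IsLinearMap ℂ (torAct r g B ℓ X)) ∧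
    (∀ v : g × ℂ, IsLinearMap ℂ (fun X : TorL r g => torAct r g B ℓ X v)) ∧
    -- module compatibility with the bracket, on the subalgebra
    (∀ X Y : TorL r g, TorPos X → TorPos Y → ∀ v : g × ℂ,
      torAct r g B ℓ (torBracket r g B X Y) v
        = torAct r g B ℓ X (torAct r g B ℓ Y v)
          - torAct r g B ℓ Y (torAct r g B ℓ X v)) ∧
    -- uniqueness
    (∀ φ : TorL r g → g × ℂ → g × ℂ,
      (∀ v : g × ℂ, IsLinearMap ℂ (fun X : TorL r g => φ X v)) →
      (∀ (μ : Fin (r+1) → ℤ) (a : g), 0 ≤ μ 0 → ∀ (b : g) (c2 : ℂ),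
        φ (Finsupp.single μ a, 0) (b, c2)
          = (if μ 0 = 0 then ⁅a, b⁆ else 0, if μ 0 = 1 then ℓ * B a b else 0)) →
      (∀ v : g × ℂ, φ (0, 1) v = ℓ • v) →
      ∀ X : TorL r g, TorPos X → φ X = torAct r g B ℓ X) ∧
    -- ℕ-grading: ℂ in degree 0, g in degree 1
    (∀ (μ : Fin (r+1) → ℤ) (a : g) (c2 : ℂ),
      torAct r g B ℓ (Finsupp.single μ a, 0) (0, c2) = 0) ∧
    (∀ (μ : Fin (r+1) → ℤ) (a b : g), 2 ≤ μ 0 →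
      torAct r g B ℓ (Finsupp.single μ a, 0) (b, 0) = 0) ∧
    (∀ (μ : Fin (r+1) → ℤ) (a b : g), μ 0 = 0 →
      (torAct r g B ℓ (Finsupp.single μ a, 0) (b, 0)).2 = 0) ∧
    (∀ (μ : Fin (r+1) → ℤ) (a b : g), μ 0 = 1 →
      (torAct r g B ℓ (Finsupp.single μ a, 0) (b, 0)).1 = 0) :=
  stmt17_general r g B hinv ℓ
end
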